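/- arXiv:1608.07227 — 13 statements merged into one kernel-verified Lean document; each statement's English description precedes it below -/
import Mathlib

section
/- For any natural number n and complex numbers ρ, θ with |ρ| < 1, |θρ| < 1, θ ≠ 1, the double series ∑_{j=0}^∞ ∑_{k=0}^{n+j} (min(n,j,k,n+j-k)+1) ρ^j θ^k converges and equals (1 - θ^{n+1}) / ((1-θ)(1-ρ)(1-θρ)). -/
/-!
The weight `min(n, j, k, n + j - k) + 1` counts the pairs `a ≤ n`, `b ≤ j` with `a + b = k`,
so the `j`-th term is `ρ ^ j (1 + ⋯ + θ ^ n)(1 + ⋯ + θ ^ j)`. For `θ ≠ 1`,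
`(1 + ⋯ + θ ^ j) ρ ^ j = (ρ ^ j - θ (θρ) ^ j) / (1 - θ)`, a difference of two geometric series.
-/

open Finset

theorem sum_range_pow_mul_sum_range_pow {R : Type*} [CommSemiring R] (x : R) (n j : ℕ) :
    (∑ a ∈ range (n + 1), x ^ a) * (∑ b ∈ range (j + 1), x ^ b) =
      ∑ k ∈ range (n + j + 1), ((min (min n j) (min k (n + j - k)) + 1 : ℕ) : R) * x ^ k := by
  calc _ = ∑ a ∈ range (n + 1), ∑ k ∈ Ico a (a + j + 1), x ^ k := by
          rw [sum_mul_sum]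
          refine sum_congr rfl fun a _ => ?_
          rw [sum_Ico_eq_sum_range, add_assoc, Nat.add_sub_cancel_left]
          simp only [pow_add]
    _ = ∑ k ∈ range (n + j + 1), ∑ _a ∈ Icc (k - j) (min n k), x ^ k :=
          sum_comm' fun a k => by simp only [mem_range, mem_Ico, mem_Icc]; omega
    _ = _ := sum_congr rfl fun k hk => by
          rw [mem_range] at hk
          rw [sum_const, Nat.card_Icc, nsmul_eq_mul]
          congr 2
          omega

theorem geom_sum_mul_pow_eq {K : Type*} [Field K] {θ : K} (hθ : θ ≠ 1) (ρ : K) (j : ℕ) :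
    (∑ b ∈ range (j + 1), θ ^ b) * ρ ^ j = (ρ ^ j - θ * (θ * ρ) ^ j) / (1 - θ) := by
  have hθ' : 1 - θ ≠ 0 := sub_ne_zero.mpr hθ.symm
  rw [geom_sum_eq hθ, eq_div_iff hθ', div_mul_eq_mul_div, div_mul_eq_mul_div,
    div_eq_iff (sub_ne_zero.mpr hθ)]
  ring

theorem hasSum_geom_sum_mul_pow {K : Type*} [NormedField K] [CompleteSpace K] {θ ρ : K}
    (hρ : ‖ρ‖ < 1) (hθρ : ‖θ * ρ‖ < 1) (hθ : θ ≠ 1) :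
    HasSum (fun j => (∑ b ∈ range (j + 1), θ ^ b) * ρ ^ j) ((1 - ρ) * (1 - θ * ρ))⁻¹ := by
  have hρ1 : 1 - ρ ≠ 0 := sub_ne_zero.mpr fun h => by simp [← h] at hρ
  have hθρ1 : 1 - θ * ρ ≠ 0 := sub_ne_zero.mpr fun h => by simp [← h] at hθρ
  convert ((hasSum_geometric_of_norm_lt_one hρ).sub
    ((hasSum_geometric_of_norm_lt_one hθρ).mul_left θ)).div_const (1 - θ) using 1
  · exact funext (geom_sum_mul_pow_eq hθ ρ)
  · grind

theorem stmt_1 (n : ℕ) (ρ θ : ℂ) (hρ : ‖ρ‖ < 1)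
    (hθρ : ‖θ * ρ‖ < 1) (hθ : θ ≠ 1) :
    HasSum (fun j : ℕ => ∑ k ∈ Finset.range (n + j + 1),
        ((min (min n j) (min k (n + j - k)) + 1 : ℕ) : ℂ) * ρ ^ j * θ ^ k)
      ((1 - θ ^ (n + 1)) / ((1 - θ) * (1 - ρ) * (1 - θ * ρ))) := by
  rw [← mul_neg_geom_sum θ, mul_assoc, mul_div_mul_left _ _ (sub_ne_zero.mpr hθ.symm),
    div_eq_mul_inv]
  refine ((hasSum_geom_sum_mul_pow hρ hθρ hθ).mul_left _).congr_fun fun j => ?_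
  rw [← mul_assoc, sum_range_pow_mul_sum_range_pow, sum_mul]
  exact sum_congr rfl fun k _ => by ring
end

section
/- For natural numbers j, k, l, n with j + k - l = n (i.e., n + l = j + k), the integral (2/π) ∫₀^π (sin((j+1)x) sin((k+1)x) sin((l+1)x) sin((n+1)x)) / sin²x dx equals min(j, k, l, n) + 1. -/
/-!
Telescoping `2 sin x sin (m x) = cos ((m - 1) x) - cos ((m + 1) x)` gives
`sin ((j + 1) x) sin ((k + 1) x) = sin x · ∑_{i ≤ min j k} sin ((j + k + 1 - 2 i) x)`,
the Clebsch–Gordan rule for the `SU(2)` characters `sin ((m + 1) x) / sin x`. Hence the integrand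
is a product of two such sums. The functions `sin (a x)`, `a ≥ 1`, are orthogonal on `[0, π]` with
square norm `π / 2`, and since `j + k = l + n` the frequencies `j + k + 1 - 2 i` and
`l + n + 1 - 2 i'` agree exactly when `i = i'`, so the integral counts the common indices
`i ≤ min (min j k) (min l n)`.
-/

open Real Finset intervalIntegral

lemma integral_cos_int_mul (m : ℤ) :
    ∫ x in (0:ℝ)..π, cos (m * x) = if m = 0 then π else 0 := by
  rcases eq_or_ne m 0 with rfl | hm
  · simp
  · rw [if_neg hm, integral_comp_mul_left cos (Int.cast_ne_zero.mpr hm)]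
    simp [sin_int_mul_pi]

lemma integral_sin_int_mul_mul_sin_int_mul {a b : ℤ} (ha : 0 < a) (hb : 0 < b) :
    ∫ x in (0:ℝ)..π, sin (a * x) * sin (b * x) = if a = b then π / 2 else 0 := by
  have product_to_sum (x : ℝ) :
      sin (a * x) * sin (b * x) = (cos ((a - b : ℤ) * x) - cos ((a + b : ℤ) * x)) / 2 := by
    push_cast
    rw [sub_mul, add_mul, ← two_mul_sin_mul_sin]
    ring
  simp_rw [product_to_sum]
  rw [integral_div, integral_sub ((by fun_prop : Continuous _).intervalIntegrable _ _)
    ((by fun_prop : Continuous _).intervalIntegrable _ _), integral_cos_int_mul,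
    integral_cos_int_mul, if_neg (show a + b ≠ 0 by omega)]
  simp only [sub_eq_zero]
  split_ifs <;> ring

noncomputable def sinLadder (j k : ℕ) (x : ℝ) : ℝ :=
  ∑ i ∈ range (min j k + 1), sin ((j + k + 1 - 2 * i : ℤ) * x)

lemma sin_mul_sinLadder (j k : ℕ) (x : ℝ) :
    sin x * sinLadder j k x = sin ((j + 1) * x) * sin ((k + 1) * x) := by
  set g : ℕ → ℝ := fun i => cos ((j + k + 2 - 2 * i) * x) / 2
  have telescoping (i : ℕ) : sin x * sin ((j + k + 1 - 2 * i : ℤ) * x) = g (i + 1) - g i := by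
    have h := two_mul_sin_mul_sin x ((j + k + 1 - 2 * i : ℤ) * x)
    simp only [g]
    push_cast at h ⊢
    rw [show x - (j + k + 1 - 2 * i) * x = -((j + k + 2 - 2 * (i + 1)) * x) by ring, cos_neg,
      show x + (j + k + 1 - 2 * i) * x = (j + k + 2 - 2 * i) * x by ring] at h
    linarith
  have h := two_mul_sin_mul_sin ((j + 1) * x) ((k + 1) * x)
  rw [sinLadder, mul_sum, sum_congr rfl fun i _ => telescoping i, sum_range_sub]
  simp only [g]
  have last_term :
      cos ((j + k + 2 - 2 * ((min j k + 1 : ℕ) : ℝ)) * x) = cos ((j + 1) * x - (k + 1) * x) := by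
    rcases le_total j k with hjk | hkj
    · rw [min_eq_left hjk, ← cos_neg]; push_cast; ring_nf
    · rw [min_eq_right hkj]; push_cast; ring_nf
  rw [last_term,
    show (j + k + 2 - 2 * ((0 : ℕ) : ℝ)) * x = (j + 1) * x + (k + 1) * x by push_cast; ring]
  linarith

lemma sum_range_sum_range_ite_eq (a b : ℕ) (c : ℝ) :
    ∑ i ∈ range (a + 1), ∑ i' ∈ range (b + 1), (if i = i' then c else 0) = (min a b + 1) * c := by
  simp only [sum_ite_eq, ← sum_filter]
  rw [show {i ∈ range (a + 1) | i ∈ range (b + 1)} = range (min a b + 1) by ext; simp]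
  simp

lemma integral_sinLadder_mul_sinLadder {j k l n : ℕ} (h : n + l = j + k) :
    ∫ x in (0:ℝ)..π, sinLadder j k x * sinLadder l n x =
      (min (min j k) (min l n) + 1) * (π / 2) := by
  simp only [sinLadder, sum_mul_sum]
  rw [integral_finsetSum fun i _ => (by fun_prop : Continuous _).intervalIntegrable _ _,
    ← sum_range_sum_range_ite_eq]
  refine sum_congr rfl fun i hi => ?_
  rw [integral_finsetSum fun i _ => (by fun_prop : Continuous _).intervalIntegrable _ _]
  refine sum_congr rfl fun i' hi' => ?_
  simp only [mem_range] at hi hi'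
  rw [integral_sin_int_mul_mul_sin_int_mul (by omega) (by omega)]
  exact if_congr (by omega) rfl rfl

lemma sin_mul_sin_mul_sin_mul_sin_div_sin_sq (j k l n : ℕ) {x : ℝ} (hx : sin x ≠ 0) :
    sin ((j + 1) * x) * sin ((k + 1) * x) * sin ((l + 1) * x) * sin ((n + 1) * x) / sin x ^ 2 =
      sinLadder j k x * sinLadder l n x := by
  rw [mul_assoc (_ * _), ← sin_mul_sinLadder, ← sin_mul_sinLadder]
  field_simp

theorem stmt_3 (j k l n : ℕ) (h : n + l = j + k) :
    (2 / Real.pi) * ∫ x in (0:ℝ)..Real.pi,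
        Real.sin ((j + 1) * x) * Real.sin ((k + 1) * x) * Real.sin ((l + 1) * x) *
          Real.sin ((n + 1) * x) / (Real.sin x) ^ 2 =
      (min (min j k) (min l n) : ℝ) + 1 := by
  have integrand_eq : ∫ x in (0:ℝ)..π,
      sin ((j + 1) * x) * sin ((k + 1) * x) * sin ((l + 1) * x) * sin ((n + 1) * x) / sin x ^ 2 =
        ∫ x in (0:ℝ)..π, sinLadder j k x * sinLadder l n x := by
    simp only [integral_of_le pi_pos.le, MeasureTheory.integral_Ioc_eq_integral_Ioo]
    exact MeasureTheory.setIntegral_congr_fun measurableSet_Ioo fun x hx =>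
      sin_mul_sin_mul_sin_mul_sin_div_sin_sq j k l n (sin_pos_of_pos_of_lt_pi hx.1 hx.2).ne'
  rw [integrand_eq, integral_sinLadder_mul_sinLadder h]
  field_simp
  push_cast
  ring
end

section
/- For natural numbers j, k, l, n with n = j + k + l + 2, the integral (2/π) ∫₀^π (sin((j+1)x) sin((k+1)x) sin((l+1)x) sin((n+1)x)) / sin²x dx equals 0. -/
/-!
Telescoping the product-to-sum formula gives
`sin (A x) sin ((j+1) x) = sin x · ∑_{t ≤ j} sin ((A + j - 2t) x)`.
Pairing `j` with `k` and `l` with `n`, the integrand becomes a product of two sine polynomials: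
the first has frequencies of absolute value at most `j + k + 1`, the second has frequencies at
least `n + 1 - l = j + k + 3`. Sines of integer frequencies `a ≠ ±b` are orthogonal on `[0, π]`.
-/

open Real Finset intervalIntegral

lemma integral_cos_int_mul_eq_zero {m : ℤ} (hm : m ≠ 0) :
    ∫ x in (0 : ℝ)..π, cos (m * x) = 0 := by
  rw [integral_comp_mul_left (fun x => cos x) (Int.cast_ne_zero.mpr hm), integral_cos,
    sin_int_mul_pi]
  simp

lemma integral_sin_int_mul_mul_sin_int_mul_eq_zero {a b : ℤ} (hab : a ≠ b) (hab' : a ≠ -b) :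
    ∫ x in (0 : ℝ)..π, sin (a * x) * sin (b * x) = 0 := by
  have product_to_sum : ∀ x : ℝ,
      sin (a * x) * sin (b * x) = (cos ((a - b : ℤ) * x) - cos ((a + b : ℤ) * x)) / 2 := by
    intro x
    push_cast
    rw [sub_mul, add_mul, ← two_mul_sin_mul_sin]
    ring
  simp_rw [product_to_sum]
  rw [integral_div, integral_sub (Continuous.intervalIntegrable (by fun_prop) _ _)
    (Continuous.intervalIntegrable (by fun_prop) _ _),
    integral_cos_int_mul_eq_zero (sub_ne_zero.mpr hab),
    integral_cos_int_mul_eq_zero (by rwa [Ne, add_eq_zero_iff_eq_neg])]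
  simp

lemma integral_sum_sin_mul_sum_sin_eq_zero {ι κ : Type*} (s : Finset ι) (t : Finset κ)
    (a : ι → ℤ) (b : κ → ℤ) (hab : ∀ i ∈ s, ∀ i' ∈ t, a i ≠ b i' ∧ a i ≠ -b i') :
    ∫ x in (0 : ℝ)..π, (∑ i ∈ s, sin (a i * x)) * ∑ i' ∈ t, sin (b i' * x) = 0 := by
  simp_rw [sum_mul_sum]
  rw [integral_finsetSum fun i _ => Continuous.intervalIntegrable (by fun_prop) _ _]
  refine sum_eq_zero fun i hi => ?_
  rw [integral_finsetSum fun i' _ => Continuous.intervalIntegrable (by fun_prop) _ _]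
  exact sum_eq_zero fun i' hi' =>
    integral_sin_int_mul_mul_sin_int_mul_eq_zero (hab i hi i' hi').1 (hab i hi i' hi').2

lemma sin_mul_sin_add (a b c : ℝ) :
    sin a * sin (b + c) = sin (a + c) * sin b + sin c * sin (a - b) := by
  rw [sin_add, sin_add, sin_sub]
  ring

lemma sin_mul_mul_sin_succ_mul_eq_sin_mul_sum (j : ℕ) (A x : ℝ) :
    sin (A * x) * sin ((j + 1) * x) = sin x * ∑ t ∈ range (j + 1), sin ((A + j - 2 * t) * x) := by
  induction j generalizing A with
  | zero => simp [mul_comm]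
  | succ j ih =>
    have shift : ∀ t : ℕ, A + ((j + 1 : ℕ) : ℝ) - 2 * t = A + 1 + j - 2 * t := by
      intro t; push_cast; ring
    rw [sum_range_succ]
    simp only [shift]
    rw [mul_add, ← ih (A + 1)]
    convert sin_mul_sin_add (A * x) ((j + 1) * x) x using 2 <;> push_cast <;> ring_nf

theorem stmt_4 (j k l n : ℕ) (h : n = j + k + l + 2) :
    (2 / Real.pi) * ∫ x in (0:ℝ)..Real.pi,
        Real.sin ((j + 1) * x) * Real.sin ((k + 1) * x) * Real.sin ((l + 1) * x) *
          Real.sin ((n + 1) * x) / (Real.sin x) ^ 2 = 0 := by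
  have factor : ∀ x ∈ Set.Ioo 0 π,
      sin ((j + 1) * x) * sin ((k + 1) * x) * sin ((l + 1) * x) * sin ((n + 1) * x) / sin x ^ 2
        = (∑ t ∈ range (j + 1), sin (((k + 1 + j - 2 * t : ℤ) : ℝ) * x))
          * ∑ s ∈ range (l + 1), sin (((n + 1 + l - 2 * s : ℤ) : ℝ) * x) := by
    intro x hx
    have hsin : sin x ≠ 0 := (sin_pos_of_pos_of_lt_pi hx.1 hx.2).ne'
    have hjk := sin_mul_mul_sin_succ_mul_eq_sin_mul_sum j (k + 1) x
    have hln := sin_mul_mul_sin_succ_mul_eq_sin_mul_sum l (n + 1) x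
    push_cast
    rw [div_eq_iff (pow_ne_zero 2 hsin)]
    linear_combination (sin ((l + 1) * x) * sin ((n + 1) * x)) * hjk
      + (sin x * ∑ t ∈ range (j + 1), sin ((k + 1 + j - 2 * t) * x)) * hln
  rw [integral_congr_Ioo_of_le pi_pos.le factor, integral_sum_sin_mul_sum_sin_eq_zero, mul_zero]
  intro t ht s hs
  rw [mem_range] at ht hs
  omega
end

section
/- Along any solution of the conformal flow i(n+1) α̇ₙ = ∑_{j=0}^∞ ∑_{k=0}^{n+j} (min(n,j,k,n+j-k)+1) conj(α_j) α_k α_{n+j-k} supported on finitely many modes, the quantity Q = ∑ₙ (n+1)|αₙ|² is conserved. -/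
/-! Write `Sₙ` for the right-hand side of the flow, so that `(n+1) α̇ₙ = -i Sₙ` and
`dQ/dt = 2 Re ∑ conj αₙ (n+1) α̇ₙ = 2 Im ∑ conj αₙ Sₙ`. The sum `∑ conj αₙ Sₙ` is the quartic form
`∑_{n+j=k+m} (min(n,j,k,m)+1) conj αₙ conj αⱼ αₖ αₘ`, whose kernel is Hermitian under the exchange
`(n,j) ↔ (k,m)`; so the form is real and `Q` is constant. -/

open Finset Complex ComplexConjugate

lemma isSelfAdjoint_sum_sum_of_star_eq {ι R : Type*} [AddCommMonoid R] [StarAddMonoid R]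
    (s : Finset ι) {K : ι → ι → R} (hK : ∀ p q, star (K p q) = K q p) :
    IsSelfAdjoint (∑ p ∈ s, ∑ q ∈ s, K p q) := by
  simp only [IsSelfAdjoint, star_sum, hK]
  exact sum_comm

lemma Finset.Nat.sum_antidiagonal_eq_sum_range_product_ite {M : Type*} [AddCommMonoid M]
    {N : ℕ} {f : ℕ × ℕ → M} (hf : ∀ q : ℕ × ℕ, N ≤ q.1 ∨ N ≤ q.2 → f q = 0) (s : ℕ) :
    ∑ q ∈ antidiagonal s, f q = ∑ q ∈ range N ×ˢ range N, if q.1 + q.2 = s then f q else 0 := by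
  rw [← sum_filter]
  refine (sum_subset (fun q => by simp) fun q hq hq' => hf q ?_).symm
  simp only [HasAntidiagonal.mem_antidiagonal, mem_filter, mem_product, mem_range] at hq hq'
  omega

noncomputable def conformalKernel (β : ℕ → ℂ) (p q : ℕ × ℕ) : ℂ :=
  if q.1 + q.2 = p.1 + p.2 then
    ((min (min p.1 p.2) (min q.1 q.2) + 1 : ℕ) : ℂ) * conj (β p.1) * conj (β p.2) * β q.1 * β q.2
  else 0

lemma star_conformalKernel (β : ℕ → ℂ) (p q : ℕ × ℕ) :
    star (conformalKernel β p q) = conformalKernel β q p := by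
  unfold conformalKernel
  split_ifs with h h' h'
  · rw [min_comm (min q.1 q.2)]
    simp only [star_mul', star_natCast, Complex.star_def, conj_conj]
    ring
  · exact absurd h.symm h'
  · exact absurd h'.symm h
  · exact star_zero _

noncomputable def flowRHS (β : ℕ → ℂ) (N n : ℕ) : ℂ :=
  ∑ j ∈ range N, ∑ k ∈ range (n + j + 1),
    ((min (min n j) (min k (n + j - k)) + 1 : ℕ) : ℂ) * conj (β j) * β k * β (n + j - k)

lemma sum_conj_mul_flowRHS_eq_sum_sum_conformalKernel {β : ℕ → ℂ} {N : ℕ}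
    (hβ : ∀ n, N ≤ n → β n = 0) :
    ∑ n ∈ range N, conj (β n) * flowRHS β N n =
      ∑ p ∈ range N ×ˢ range N, ∑ q ∈ range N ×ˢ range N, conformalKernel β p q := by
  rw [sum_product]
  refine sum_congr rfl fun n _ => ?_
  rw [flowRHS, mul_sum]
  refine sum_congr rfl fun j _ => ?_
  let G : ℕ × ℕ → ℂ := fun q => ((min (min n j) (min q.1 q.2) + 1 : ℕ) : ℂ) *
    conj (β n) * conj (β j) * β q.1 * β q.2
  have hG : ∀ q : ℕ × ℕ, N ≤ q.1 ∨ N ≤ q.2 → G q = 0 := by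
    rintro q (hq | hq) <;> simp [G, hβ _ hq]
  calc conj (β n) * ∑ k ∈ range (n + j + 1),
        ((min (min n j) (min k (n + j - k)) + 1 : ℕ) : ℂ) * conj (β j) * β k * β (n + j - k)
      = ∑ q ∈ antidiagonal (n + j), G q := by
        rw [Nat.sum_antidiagonal_eq_sum_range_succ_mk, mul_sum]
        exact sum_congr rfl fun k _ => by ring
    _ = _ := Nat.sum_antidiagonal_eq_sum_range_product_ite hG _

lemma im_sum_conj_mul_flowRHS {β : ℕ → ℂ} {N : ℕ} (hβ : ∀ n, N ≤ n → β n = 0) :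
    (∑ n ∈ range N, conj (β n) * flowRHS β N n).im = 0 := by
  rw [← conj_eq_iff_im, sum_conj_mul_flowRHS_eq_sum_sum_conformalKernel hβ]
  exact isSelfAdjoint_sum_sum_of_star_eq _ (star_conformalKernel β)

lemma hasDerivAt_sum_weighted_normSq {α : ℕ → ℝ → ℂ} (hdiff : ∀ n, Differentiable ℝ (α n))
    (N : ℕ) (t : ℝ) :
    HasDerivAt (fun u => ∑ n ∈ range N, ((n : ℝ) + 1) * ‖α n u‖ ^ 2)
      (2 * (∑ n ∈ range N, conj (α n t) * (((n : ℂ) + 1) * deriv (α n) t)).re) t := by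
  refine (HasDerivAt.fun_sum fun n _ =>
    ((hdiff n t).hasDerivAt.norm_sq).const_mul ((n : ℝ) + 1)).congr_deriv ?_
  simp only [Complex.inner, re_sum, mul_sum]
  refine sum_congr rfl fun n _ => ?_
  simp only [mul_re, mul_im, add_re, add_im, natCast_re, natCast_im, one_re, one_im, conj_re,
    conj_im]
  ring

theorem stmt_5 (α : ℕ → ℝ → ℂ) (N : ℕ)
    (hsupp : ∀ n, N ≤ n → ∀ t : ℝ, α n t = 0)
    (hdiff : ∀ n, Differentiable ℝ (α n))
    (hflow : ∀ (n : ℕ) (t : ℝ),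
      Complex.I * ((n : ℂ) + 1) * deriv (α n) t =
        ∑' j : ℕ, ∑ k ∈ Finset.range (n + j + 1),
          ((min (min n j) (min k (n + j - k)) + 1 : ℕ) : ℂ) *
            (starRingEnd ℂ) (α j t) * α k t * α (n + j - k) t) :
    ∀ t s : ℝ,
      (∑' n : ℕ, ((n : ℝ) + 1) * ‖α n t‖ ^ 2) =
      (∑' n : ℕ, ((n : ℝ) + 1) * ‖α n s‖ ^ 2) := by
  have hmode : ∀ (n : ℕ) t, ((n : ℂ) + 1) * deriv (α n) t = -I * flowRHS (α · t) N n := by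
    intro n t
    have h := hflow n t
    rw [tsum_eq_sum (s := range N) fun j hj => sum_eq_zero fun k _ => by
      simp [hsupp j (by simpa using hj) t]] at h
    simp only [flowRHS]
    linear_combination -I * h + ((n : ℂ) + 1) * deriv (α n) t * I_mul_I
  have hconst : ∀ t, HasDerivAt (fun u => ∑ n ∈ range N, ((n : ℝ) + 1) * ‖α n u‖ ^ 2) 0 t := by
    intro t
    refine (hasDerivAt_sum_weighted_normSq hdiff N t).congr_deriv ?_
    simp_rw [hmode, mul_left_comm _ (-I), ← mul_sum]
    rw [neg_mul, neg_re, I_mul_re, im_sum_conj_mul_flowRHS fun n hn => hsupp n hn t]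
    simp
  intro t s
  rw [tsum_eq_sum (s := range N) fun n hn => by simp [hsupp n (by simpa using hn) t],
    tsum_eq_sum (s := range N) fun n hn => by simp [hsupp n (by simpa using hn) s]]
  exact is_const_of_deriv_eq_zero (fun u => (hconst u).differentiableAt)
    (fun u => (hconst u).deriv) t s
end

section
/- Along any solution of the conformal flow i(n+1) α̇ₙ = ∑_{j=0}^∞ ∑_{k=0}^{n+j} (min(n,j,k,n+j-k)+1) conj(α_j) α_k α_{n+j-k} supported on finitely many modes, the quantity E = ∑ₙ (n+1)²|αₙ|² is conserved. -/
/-!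
Writing `E' = 2 ∑ₙ (n+1)² Re(α̇ₙ ᾱₙ)` and substituting the flow turns `E'` into twice the
imaginary part of `T = ∑ (n+1) S_{njkl} ᾱₙ ᾱⱼ αₖ αₗ`, summed over the resonant quadruples
`n + j = k + l`, with `S_{njkl} = min(n,j,k,l) + 1`. The summand without the weight is symmetric
in `(n,j)` and in `(k,l)`, and conjugation exchanges the pairs; so `2T` carries the weight
`n + j + 2` and `2 T̄` the weight `k + l + 2`, which agree on resonant quadruples. Hence `T` is
real and `E' = 0`.
-/

open Finset Complex
open scoped ComplexConjugate

namespace ConformalFlow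

theorem im_sum_sum_eq_zero_of_resonant {ι : Type*} (s : Finset (ι × ι))
    (hs : ∀ p ∈ s, p.swap ∈ s) (w : ι → ℝ) (G : ι × ι → ι × ι → ℂ)
    (hG_swap : ∀ p q, G p.swap q = G p q) (hG_conj : ∀ p q, conj (G p q) = G q p)
    (hres : ∀ p q, G p q ≠ 0 → w p.1 + w p.2 = w q.1 + w q.2) :
    (∑ p ∈ s, ∑ q ∈ s, (w p.1 : ℂ) * G p q).im = 0 := by
  have sum_swap : ∀ f : ι × ι → ℂ, ∑ p ∈ s, f p.swap = ∑ p ∈ s, f p := fun f =>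
    sum_nbij' Prod.swap Prod.swap hs hs (fun _ _ => rfl) (fun _ _ => rfl)
      (fun _ _ => rfl)
  have hG_swap' : ∀ p q, G p q.swap = G p q := fun p q => by
    rw [← hG_conj, hG_swap, hG_conj]
  set T := ∑ p ∈ s, ∑ q ∈ s, (w p.1 : ℂ) * G p q
  have hT : 2 * T = ∑ p ∈ s, ∑ q ∈ s, ((w p.1 + w p.2 : ℝ) : ℂ) * G p q := by
    have : T = ∑ p ∈ s, ∑ q ∈ s, (w p.2 : ℂ) * G p q := by
      rw [← sum_swap (fun p => ∑ q ∈ s, (w p.2 : ℂ) * G p q)]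
      simp only [Prod.snd_swap, hG_swap]
      rfl
    rw [two_mul]; nth_rewrite 2 [this]
    rw [← sum_add_distrib]; push_cast; simp only [add_mul, sum_add_distrib]
  have hconjT : 2 * conj T = ∑ p ∈ s, ∑ q ∈ s, ((w q.1 + w q.2 : ℝ) : ℂ) * G p q := by
    have h1 : conj T = ∑ p ∈ s, ∑ q ∈ s, (w q.1 : ℂ) * G p q := by
      simp only [T, map_sum, map_mul, conj_ofReal, hG_conj]
      exact sum_comm
    have h2 : conj T = ∑ p ∈ s, ∑ q ∈ s, (w q.2 : ℂ) * G p q := by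
      rw [h1]; refine sum_congr rfl fun p _ => ?_
      rw [← sum_swap (fun q => (w q.2 : ℂ) * G p q)]
      simp only [Prod.snd_swap, hG_swap']
    rw [two_mul]; nth_rewrite 2 [h2]
    rw [h1, ← sum_add_distrib]; push_cast; simp only [add_mul, sum_add_distrib]
  have hreal : conj T = T := by
    refine mul_left_cancel₀ (two_ne_zero (α := ℂ)) ?_
    rw [hT, hconjT]
    refine sum_congr rfl fun p _ => sum_congr rfl fun q _ => ?_
    by_cases h : G p q = 0
    · simp [h]
    · rw [hres p q h]
  exact conj_eq_iff_im.mp hreal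

/-- `S_{njkl} ᾱₙ ᾱⱼ αₖ αₗ` for `p = (n, j)`, `q = (k, l)`, cut off to the resonant set. -/
def interaction (a : ℕ → ℂ) (p q : ℕ × ℕ) : ℂ :=
  if p.1 + p.2 = q.1 + q.2 then
    ((min (min p.1 p.2) (min q.1 q.2) + 1 : ℕ) : ℂ) *
      conj (a p.1) * conj (a p.2) * a q.1 * a q.2
  else 0

noncomputable def nonlinearity (a : ℕ → ℂ) (n : ℕ) : ℂ :=
  ∑' j : ℕ, ∑ k ∈ range (n + j + 1),
    ((min (min n j) (min k (n + j - k)) + 1 : ℕ) : ℂ) * conj (a j) * a k * a (n + j - k)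

theorem interaction_swap_left (a : ℕ → ℂ) (p q : ℕ × ℕ) :
    interaction a p.swap q = interaction a p q := by
  simp only [interaction, Prod.fst_swap, Prod.snd_swap, add_comm p.2, min_comm p.2]
  split_ifs <;> ring

theorem conj_interaction (a : ℕ → ℂ) (p q : ℕ × ℕ) :
    conj (interaction a p q) = interaction a q p := by
  simp only [interaction, eq_comm (a := p.1 + p.2), min_comm (min p.1 p.2)]
  split_ifs <;> simp only [map_mul, map_natCast, conj_conj, map_zero]; ring

theorem conj_mul_nonlinearity {a : ℕ → ℂ} {N : ℕ} (ha : ∀ n, N ≤ n → a n = 0) (n : ℕ) :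
    conj (a n) * nonlinearity a n =
      ∑ j ∈ range N, ∑ q ∈ range N ×ˢ range N, interaction a (n, j) q := by
  rw [nonlinearity, tsum_eq_sum (s := range N) fun j hj => by
    simp [ha j (by simpa using hj)], mul_sum]
  refine sum_congr rfl fun j _ => ?_
  let f : ℕ × ℕ → ℂ := fun q => ((min (min n j) (min q.1 q.2) + 1 : ℕ) : ℂ) *
    conj (a n) * conj (a j) * a q.1 * a q.2
  calc conj (a n) * ∑ k ∈ range (n + j + 1), ((min (min n j) (min k (n + j - k)) + 1 : ℕ) : ℂ) *
        conj (a j) * a k * a (n + j - k)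
      = ∑ q ∈ antidiagonal (n + j), f q := by
        rw [Nat.sum_antidiagonal_eq_sum_range_succ_mk, mul_sum]
        exact sum_congr rfl fun k _ => by ring
    _ = ∑ q ∈ (range N ×ˢ range N).filter (fun q => n + j = q.1 + q.2), f q := by
        refine (sum_subset (fun q hq => by simp_all) fun q hq hq' => ?_).symm
        have : N ≤ q.1 ∨ N ≤ q.2 := by simp_all; omega
        rcases this with h | h <;> simp [f, ha _ h]
    _ = ∑ q ∈ range N ×ˢ range N, interaction a (n, j) q := by
        rw [sum_filter]; rfl

theorem im_sum_mul_nonlinearity_eq_zero {a : ℕ → ℂ} {N : ℕ} (ha : ∀ n, N ≤ n → a n = 0) :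
    (∑ n ∈ range N, ((n : ℂ) + 1) * conj (a n) * nonlinearity a n).im = 0 := by
  have hsum : ∑ n ∈ range N, ((n : ℂ) + 1) * conj (a n) * nonlinearity a n =
      ∑ p ∈ range N ×ˢ range N, ∑ q ∈ range N ×ˢ range N,
        (((p.1 : ℝ) + 1 : ℝ) : ℂ) * interaction a p q := by
    rw [sum_product]
    refine sum_congr rfl fun n _ => ?_
    rw [mul_assoc, conj_mul_nonlinearity ha, mul_sum]
    refine sum_congr rfl fun j _ => ?_
    rw [mul_sum]
    push_cast
    rfl
  rw [hsum]
  refine im_sum_sum_eq_zero_of_resonant _ (fun p hp => by simpa [and_comm] using hp)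
    (fun n : ℕ => (n : ℝ) + 1) (interaction a) (interaction_swap_left a) (conj_interaction a)
    fun p q hpq => ?_
  have resonant : p.1 + p.2 = q.1 + q.2 := by
    by_contra h
    simp [interaction, h] at hpq
  have : (p.1 : ℝ) + p.2 = q.1 + q.2 := by exact_mod_cast resonant
  linarith

theorem re_mul_conj_eq_im_of_flow {c : ℝ} {a d F : ℂ} (h : I * c * d = F) :
    c ^ 2 * (d * conj a).re = (c * conj a * F).im := by
  rw [← h, show (c : ℂ) * conj a * (I * c * d) = I * ((c ^ 2 : ℝ) * (d * conj a)) by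
    push_cast; ring, I_mul_im, re_ofReal_mul]

theorem hasDerivAt_energy {α : ℕ → ℝ → ℂ} {N : ℕ} (hsupp : ∀ n, N ≤ n → ∀ t, α n t = 0)
    (hdiff : ∀ n, Differentiable ℝ (α n))
    (hflow : ∀ (n : ℕ) t, I * ((n : ℂ) + 1) * deriv (α n) t = nonlinearity (α · t) n) (t : ℝ) :
    HasDerivAt (fun u => ∑ n ∈ range N, ((n : ℝ) + 1) ^ 2 * ‖α n u‖ ^ 2) 0 t := by
  have hderiv := HasDerivAt.fun_sum fun n (_ : n ∈ range N) =>
    ((hdiff n t).hasDerivAt.norm_sq).const_mul (((n : ℝ) + 1) ^ 2)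
  have hzero : ∑ n ∈ range N, ((n : ℝ) + 1) ^ 2 * (2 * inner ℝ (α n t) (deriv (α n) t)) = 0 :=
    calc _ = 2 * ∑ n ∈ range N, ((n : ℝ) + 1) ^ 2 * (deriv (α n) t * conj (α n t)).re := by
          simp only [Complex.inner, mul_sum]
          exact sum_congr rfl fun n _ => by ring
      _ = 2 * (∑ n ∈ range N, ((n : ℂ) + 1) * conj (α n t) * nonlinearity (α · t) n).im := by
          rw [im_sum]
          congr 1
          refine sum_congr rfl fun n _ => ?_
          exact_mod_cast re_mul_conj_eq_im_of_flow (c := (n : ℝ) + 1) (by exact_mod_cast hflow n t)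
      _ = 0 := by rw [im_sum_mul_nonlinearity_eq_zero fun n hn => hsupp n hn t, mul_zero]
  rwa [hzero] at hderiv

end ConformalFlow

theorem stmt_6 (α : ℕ → ℝ → ℂ) (N : ℕ)
    (hsupp : ∀ n, N ≤ n → ∀ t : ℝ, α n t = 0)
    (hdiff : ∀ n, Differentiable ℝ (α n))
    (hflow : ∀ (n : ℕ) (t : ℝ),
      Complex.I * ((n : ℂ) + 1) * deriv (α n) t =
        ∑' j : ℕ, ∑ k ∈ Finset.range (n + j + 1),
          ((min (min n j) (min k (n + j - k)) + 1 : ℕ) : ℂ) *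
            (starRingEnd ℂ) (α j t) * α k t * α (n + j - k) t) :
    ∀ t s : ℝ,
      (∑' n : ℕ, ((n : ℝ) + 1) ^ 2 * ‖α n t‖ ^ 2) =
      (∑' n : ℕ, ((n : ℝ) + 1) ^ 2 * ‖α n s‖ ^ 2) := by
  intro t s
  have energy_eq_sum : ∀ u, ∑' n : ℕ, ((n : ℝ) + 1) ^ 2 * ‖α n u‖ ^ 2 =
      ∑ n ∈ range N, ((n : ℝ) + 1) ^ 2 * ‖α n u‖ ^ 2 :=
    fun u => tsum_eq_sum fun n hn => by simp [hsupp n (by simpa using hn) u]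
  have hE := ConformalFlow.hasDerivAt_energy hsupp hdiff hflow
  rw [energy_eq_sum, energy_eq_sum]
  exact is_const_of_deriv_eq_zero (fun u => (hE u).differentiableAt) (fun u => (hE u).deriv) t s
end

section
/- Along any finitely supported solution of the conformal flow, the Hamiltonian H = ∑ₙ ∑ⱼ ∑_{k=0}^{n+j} (min(n,j,k,n+j-k)+1) conj(αₙ) conj(α_j) α_k α_{n+j-k} is conserved. -/
/-!
Since `αₙ = 0` for `n ≥ N`, the Hamiltonian is the finite quartic form
`Q(a,b,c,e) = ∑ S n j k l · conj aₙ · conj bⱼ · c_k · e_l` at `a = b = c = e = α`, summed over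
`n, j, k, l < N`, with `S n j k l = [k + l = n + j] (min(n,j,k,l) + 1)`. The coefficients are
symmetric in `(n,j)`, in `(k,l)`, and real and symmetric under `(n,j) ↔ (k,l)`, so
`d/dt Q(α,α,α,α) = 4 Re Q(α',α,α,α)`. By the flow,
`Q(α',α,α,α) = ∑ₙ conj α'ₙ · i(n+1) α'ₙ = i ∑ₙ (n+1) |α'ₙ|²` is purely imaginary.
-/

open Finset Complex ComplexConjugate

section QuarticForm

variable {ι : Type*} (S : ι → ι → ι → ι → ℂ) (s : Finset ι)

noncomputable def quarticForm (a b c e : ι → ℂ) : ℂ :=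
  ∑ n ∈ s, ∑ j ∈ s, ∑ k ∈ s, ∑ l ∈ s, S n j k l * conj (a n) * conj (b j) * c k * e l

noncomputable def cubicForm (a : ι → ℂ) (n : ι) : ℂ :=
  ∑ j ∈ s, ∑ k ∈ s, ∑ l ∈ s, S n j k l * conj (a j) * a k * a l

lemma sum_comm_pairs {M : Type*} [AddCommMonoid M] (f : ι → ι → ι → ι → M) :
    ∑ n ∈ s, ∑ j ∈ s, ∑ k ∈ s, ∑ l ∈ s, f n j k l =
      ∑ k ∈ s, ∑ l ∈ s, ∑ n ∈ s, ∑ j ∈ s, f n j k l :=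
  calc _ = ∑ n ∈ s, ∑ k ∈ s, ∑ l ∈ s, ∑ j ∈ s, f n j k l :=
        sum_congr rfl fun _ _ => sum_comm.trans (sum_congr rfl fun _ _ => sum_comm)
    _ = _ := sum_comm.trans (sum_congr rfl fun _ _ => sum_comm)

variable {S}

lemma quarticForm_comm_left (hS : ∀ n j k l, S j n k l = S n j k l) (a b c e : ι → ℂ) :
    quarticForm S s a b c e = quarticForm S s b a c e := by
  unfold quarticForm
  rw [sum_comm]
  refine sum_congr rfl fun n _ => sum_congr rfl fun j _ => sum_congr rfl fun k _ =>
    sum_congr rfl fun l _ => ?_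
  rw [hS]; ring

lemma quarticForm_comm_right (hS : ∀ n j k l, S n j l k = S n j k l) (a b c e : ι → ℂ) :
    quarticForm S s a b c e = quarticForm S s a b e c := by
  unfold quarticForm
  refine sum_congr rfl fun n _ => sum_congr rfl fun j _ => ?_
  rw [sum_comm]
  refine sum_congr rfl fun k _ => sum_congr rfl fun l _ => ?_
  rw [hS]; ring

lemma conj_quarticForm (hS : ∀ n j k l, conj (S k l n j) = S n j k l) (a b c e : ι → ℂ) :
    conj (quarticForm S s a b c e) = quarticForm S s c e a b := by
  simp only [quarticForm, map_sum, map_mul, conj_conj]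
  rw [sum_comm_pairs]
  refine sum_congr rfl fun k _ => sum_congr rfl fun l _ => sum_congr rfl fun n _ =>
    sum_congr rfl fun j _ => ?_
  rw [hS]; ring

lemma quarticForm_eq_sum_mul_cubicForm (a d : ι → ℂ) :
    quarticForm S s d a a a = ∑ n ∈ s, conj (d n) * cubicForm S s a n := by
  simp only [quarticForm, cubicForm, mul_sum]
  refine sum_congr rfl fun n _ => sum_congr rfl fun j _ => sum_congr rfl fun k _ =>
    sum_congr rfl fun l _ => ?_
  ring

lemma re_quarticForm_eq_zero_of_cubicForm_eq {a d : ι → ℂ} (w : ι → ℝ)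
    (h : ∀ n ∈ s, cubicForm S s a n = I * w n * d n) :
    (quarticForm S s d a a a).re = 0 := by
  rw [quarticForm_eq_sum_mul_cubicForm, re_sum]
  refine sum_eq_zero fun n hn => ?_
  rw [h n hn, show conj (d n) * (I * w n * d n) = I * (w n * normSq (d n) : ℝ) by
    rw [ofReal_mul, ← mul_conj]; ring]
  simp

lemma quarticForm_variation_eq_re (hS₁ : ∀ n j k l, S j n k l = S n j k l)
    (hS₂ : ∀ n j k l, S n j l k = S n j k l) (hS₃ : ∀ n j k l, conj (S k l n j) = S n j k l)
    (a d : ι → ℂ) :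
    quarticForm S s d a a a + quarticForm S s a d a a + quarticForm S s a a d a +
      quarticForm S s a a a d = 4 * ((quarticForm S s d a a a).re : ℂ) := by
  rw [← quarticForm_comm_left s hS₁ d, ← quarticForm_comm_right s hS₂ a a d,
    ← conj_quarticForm s hS₃ d]
  have h := add_conj (quarticForm S s d a a a)
  push_cast at h
  linear_combination 2 * h

lemma hasDerivAt_quarticForm {a : ι → ℝ → ℂ} {a' : ι → ℂ} {u : ℝ}
    (ha : ∀ i ∈ s, HasDerivAt (a i) (a' i) u) :
    HasDerivAt (fun t => quarticForm S s (a · t) (a · t) (a · t) (a · t))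
      (quarticForm S s a' (a · u) (a · u) (a · u) + quarticForm S s (a · u) a' (a · u) (a · u) +
        quarticForm S s (a · u) (a · u) a' (a · u) + quarticForm S s (a · u) (a · u) (a · u) a')
      u := by
  have hconj : ∀ i ∈ s, HasDerivAt (fun t => conj (a i t)) (conj (a' i)) u :=
    fun i hi => (ha i hi).star
  simp only [quarticForm, ← sum_add_distrib]
  refine HasDerivAt.fun_sum fun n hn => HasDerivAt.fun_sum fun j hj =>
    HasDerivAt.fun_sum fun k hk => HasDerivAt.fun_sum fun l hl => ?_
  exact ((((hconj n hn).const_mul (S n j k l)).fun_mul (hconj j hj)).fun_mul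
    (ha k hk)).fun_mul (ha l hl) |>.congr_deriv (by ring)

theorem quarticForm_eq_of_flow (hS₁ : ∀ n j k l, S j n k l = S n j k l)
    (hS₂ : ∀ n j k l, S n j l k = S n j k l) (hS₃ : ∀ n j k l, conj (S k l n j) = S n j k l)
    {a : ι → ℝ → ℂ} (w : ι → ℝ) (hdiff : ∀ i ∈ s, Differentiable ℝ (a i))
    (hflow : ∀ i ∈ s, ∀ t, cubicForm S s (a · t) i = I * w i * deriv (a i) t) (t t' : ℝ) :
    quarticForm S s (a · t) (a · t) (a · t) (a · t) =
      quarticForm S s (a · t') (a · t') (a · t') (a · t') := by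
  have hderiv : ∀ u, HasDerivAt (fun t => quarticForm S s (a · t) (a · t) (a · t) (a · t)) 0 u := by
    intro u
    have h := hasDerivAt_quarticForm (S := S) s fun i hi => (hdiff i hi u).hasDerivAt
    rwa [quarticForm_variation_eq_re s hS₁ hS₂ hS₃,
      re_quarticForm_eq_zero_of_cubicForm_eq s w (hflow · · u), ofReal_zero, mul_zero] at h
  exact is_const_of_deriv_eq_zero (fun u => (hderiv u).differentiableAt)
    (fun u => (hderiv u).deriv) t t'

end QuarticForm

lemma sum_range_succ_sub_eq_sum_range_sum_range_ite {M : Type*} [AddCommMonoid M]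
    (f : ℕ → ℕ → M) (m N : ℕ) (hf : ∀ k l, N ≤ k ∨ N ≤ l → f k l = 0) :
    ∑ k ∈ range (m + 1), f k (m - k) =
      ∑ k ∈ range N, ∑ l ∈ range N, if k + l = m then f k l else 0 := by
  rw [← Nat.sum_antidiagonal_eq_sum_range_succ f, ← sum_product', ← sum_filter]
  refine (sum_subset (fun p => ?_) fun p hp hp' => hf p.1 p.2 ?_).symm
  · simp only [mem_filter, mem_product, mem_range, HasAntidiagonal.mem_antidiagonal]
    exact And.right
  · simp only [mem_filter, mem_product, mem_range, HasAntidiagonal.mem_antidiagonal] at hp hp'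
    omega

lemma tsum_eq_sum_range_of_ge {M : Type*} [AddCommMonoid M] [TopologicalSpace M] {f : ℕ → M}
    {N : ℕ} (hf : ∀ n, N ≤ n → f n = 0) : ∑' n, f n = ∑ n ∈ range N, f n :=
  tsum_eq_sum fun n hn => hf n (by simpa using hn)

/-- The indicator `[k + l = n + j]` encodes the constraint `l = n + j - k` of the flow. -/
noncomputable def conformalCoeff (n j k l : ℕ) : ℂ :=
  if k + l = n + j then ((min (min n j) (min k l) + 1 : ℕ) : ℂ) else 0

lemma conformalCoeff_comm_left (n j k l : ℕ) :
    conformalCoeff j n k l = conformalCoeff n j k l := by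
  simp only [conformalCoeff, Nat.add_comm j n, min_comm j n]

lemma conformalCoeff_comm_right (n j k l : ℕ) :
    conformalCoeff n j l k = conformalCoeff n j k l := by
  simp only [conformalCoeff, Nat.add_comm l k, min_comm l k]

lemma conj_conformalCoeff (n j k l : ℕ) :
    conj (conformalCoeff k l n j) = conformalCoeff n j k l := by
  simp only [conformalCoeff, apply_ite conj, map_natCast, map_zero, eq_comm (a := n + j),
    min_comm (min k l)]

section ConformalFlow

variable {a : ℕ → ℂ} {N : ℕ}

lemma tsum_conformal_eq_quarticForm (ha : ∀ n, N ≤ n → a n = 0) :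
    ∑' n : ℕ, ∑' j : ℕ, ∑ k ∈ range (n + j + 1),
        ((min (min n j) (min k (n + j - k)) + 1 : ℕ) : ℂ) *
          conj (a n) * conj (a j) * a k * a (n + j - k) =
      quarticForm conformalCoeff (range N) a a a a := by
  have hconj : ∀ n, N ≤ n → conj (a n) = 0 := fun n hn => by rw [ha n hn, map_zero]
  rw [tsum_eq_sum_range_of_ge fun n hn => ?_]
  · refine sum_congr rfl fun n _ => ?_
    rw [tsum_eq_sum_range_of_ge fun j hj => ?_]
    · refine sum_congr rfl fun j _ => ?_
      rw [sum_range_succ_sub_eq_sum_range_sum_range_ite (fun k l =>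
        ((min (min n j) (min k l) + 1 : ℕ) : ℂ) * conj (a n) * conj (a j) * a k * a l) _ N]
      · simp only [conformalCoeff, ite_mul, zero_mul]
      · rintro k l (h | h) <;> simp [ha _ h]
    · simp [hconj j hj]
  · simp [hconj n hn]

lemma tsum_conformal_eq_cubicForm (ha : ∀ n, N ≤ n → a n = 0) (n : ℕ) :
    ∑' j : ℕ, ∑ k ∈ range (n + j + 1),
        ((min (min n j) (min k (n + j - k)) + 1 : ℕ) : ℂ) * conj (a j) * a k * a (n + j - k) =
      cubicForm conformalCoeff (range N) a n := by
  rw [tsum_eq_sum_range_of_ge fun j hj => by simp [ha j hj]]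
  refine sum_congr rfl fun j _ => ?_
  rw [sum_range_succ_sub_eq_sum_range_sum_range_ite (fun k l =>
    ((min (min n j) (min k l) + 1 : ℕ) : ℂ) * conj (a j) * a k * a l) _ N]
  · simp only [conformalCoeff, ite_mul, zero_mul]
  · rintro k l (h | h) <;> simp [ha _ h]

end ConformalFlow

theorem stmt_7 (α : ℕ → ℝ → ℂ) (N : ℕ)
    (hsupp : ∀ n, N ≤ n → ∀ t : ℝ, α n t = 0)
    (hdiff : ∀ n, Differentiable ℝ (α n))
    (hflow : ∀ (n : ℕ) (t : ℝ),
      Complex.I * ((n : ℂ) + 1) * deriv (α n) t =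
        ∑' j : ℕ, ∑ k ∈ Finset.range (n + j + 1),
          ((min (min n j) (min k (n + j - k)) + 1 : ℕ) : ℂ) *
            (starRingEnd ℂ) (α j t) * α k t * α (n + j - k) t) :
    ∀ t s : ℝ,
      (∑' n : ℕ, ∑' j : ℕ, ∑ k ∈ Finset.range (n + j + 1),
        ((min (min n j) (min k (n + j - k)) + 1 : ℕ) : ℂ) *
          (starRingEnd ℂ) (α n t) * (starRingEnd ℂ) (α j t) * α k t * α (n + j - k) t) =
      (∑' n : ℕ, ∑' j : ℕ, ∑ k ∈ Finset.range (n + j + 1),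
        ((min (min n j) (min k (n + j - k)) + 1 : ℕ) : ℂ) *
          (starRingEnd ℂ) (α n s) * (starRingEnd ℂ) (α j s) * α k s * α (n + j - k) s) := by
  intro t s
  have hsupp' : ∀ u, ∀ n, N ≤ n → α n u = 0 := fun u n hn => hsupp n hn u
  rw [tsum_conformal_eq_quarticForm (hsupp' t), tsum_conformal_eq_quarticForm (hsupp' s)]
  refine quarticForm_eq_of_flow (range N) conformalCoeff_comm_left conformalCoeff_comm_right
    conj_conformalCoeff (fun n => n + 1) (fun n _ => hdiff n) (fun n _ u => ?_) t s
  rw [← tsum_conformal_eq_cubicForm (hsupp' u), ← hflow]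
  push_cast
  ring
end

section
/- Given real constants M, P with M, P > 0 and real initial data a₀, b₀, p₀, the functions a(t) = a₀ e^{-iMt}, b(t) = (b₀ cos(ωt) - i (b₀(M+P) + 2a₀p₀P)/(2ω) sin(ωt)) e^{-i(M+P)t/2}, p(t) = (p₀ cos(ωt) - i (p₀(M+P) + 2a₀b₀)/(2ω) sin(ωt)) e^{-i(M-P)t/2}, with ω = (1/2)√((M+P)² - 4Pa₀²) assumed real and nonzero, solve the system i ȧ = M a, i ḃ = (M+P) b + P a conj(p), i ṗ = M p + a conj(b), provided M = |b₀|² + |a₀+b₀p₀|²/(1-p₀²) and P = |a₀+b₀p₀|²/(1-p₀²)². -/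
/-!
Since `a = a₀ e^{-iMt}` and `e^{-iMt} · conj(e^{-i(M∓P)t/2}) = e^{-i(M±P)t/2}`, factoring the
phases `e^{-i(M+P)t/2}` and `e^{-i(M-P)t/2}` out of `b` and `p` turns the system
into the constant-coefficient one `i u' = σ u + P a₀ v̄`, `i v' = σ v + a₀ ū` for the amplitudes,
with `σ = (M + P)/2`. Its solutions `c₁ cos ωt - i c₂ sin ωt` oscillate at the
frequency `ω² = σ² - P a₀²`.
-/

open Complex

noncomputable def cosSubISin (c₁ c₂ ω t : ℝ) : ℂ :=
  (c₁ : ℂ) * Real.cos (ω * t) - I * (c₂ : ℝ) * Real.sin (ω * t)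

theorem hasDerivAt_cosSubISin (c₁ c₂ ω t : ℝ) :
    HasDerivAt (cosSubISin c₁ c₂ ω) (-I * ω * cosSubISin c₂ c₁ ω t) t := by
  have hlin : HasDerivAt (fun s : ℝ => ω * s) ω t := by
    simpa using (hasDerivAt_id t).const_mul ω
  have hcos := ((Real.hasDerivAt_cos (ω * t)).comp t hlin).ofReal_comp
  have hsin := ((Real.hasDerivAt_sin (ω * t)).comp t hlin).ofReal_comp
  refine ((hcos.const_mul (c₁ : ℂ)).sub (hsin.const_mul (I * (c₂ : ℂ)))).congr_deriv ?_
  simp only [cosSubISin]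
  push_cast
  linear_combination -(c₁ : ℂ) * ω * Complex.sin (ω * t) * I_sq

theorem conj_cosSubISin (c₁ c₂ ω t : ℝ) :
    starRingEnd ℂ (cosSubISin c₁ c₂ ω t) = cosSubISin c₁ (-c₂) ω t := by
  simp only [cosSubISin, map_sub, map_mul, conj_ofReal, conj_I, ofReal_neg]
  ring

/-- Since `I * deriv (cosSubISin u₁ u₂ ω) = ω * cosSubISin u₂ u₁ ω`, this is the equation
`i u' = σ u + α v̄` for `u = cosSubISin u₁ u₂ ω`, `v = cosSubISin v₁ v₂ ω`: `hu` matches the cosine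
parts, and `ω² = σ² - αβ` together with `hv` the sine parts. -/
theorem cosSubISin_swap_eq {σ α β ω u₁ u₂ v₁ v₂ : ℝ} (hω : ω ≠ 0)
    (hω2 : ω ^ 2 = σ ^ 2 - α * β) (hu : ω * u₂ = σ * u₁ + α * v₁)
    (hv : ω * v₂ = σ * v₁ + β * u₁) (t : ℝ) :
    ω * cosSubISin u₂ u₁ ω t =
      σ * cosSubISin u₁ u₂ ω t + α * starRingEnd ℂ (cosSubISin v₁ v₂ ω t) := by
  have hsin : ω * u₁ = σ * u₂ - α * v₂ := by
    refine mul_left_cancel₀ hω ?_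
    linear_combination u₁ * hω2 - σ * hu + α * hv
  rw [conj_cosSubISin]
  unfold cosSubISin
  linear_combination (norm := (push_cast; ring))
    (Real.cos (ω * t) : ℂ) * congrArg ofReal hu - I * Real.sin (ω * t) * congrArg ofReal hsin

theorem I_mul_deriv_eq_of_eq_mul_exp {f u : ℝ → ℂ} {u' : ℂ} {d t : ℝ}
    (hu : HasDerivAt u u' t) (hf : ∀ s, f s = u s * exp (-I * d * s)) :
    I * deriv f t = (I * u' + d * u t) * exp (-I * d * t) := by
  have hexp :
      HasDerivAt (fun s : ℝ => exp (-I * d * s)) (exp (-I * d * t) * (-I * d)) t := by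
    simpa using ((hasDerivAt_id t).ofReal_comp.const_mul (-I * d)).cexp
  have hprod : HasDerivAt (fun s : ℝ => u s * exp (-I * d * s)) _ t := hu.mul hexp
  rw [funext hf, hprod.deriv]
  linear_combination -(d : ℂ) * u t * exp (-I * d * t) * I_sq

theorem exp_mul_conj_exp {d₁ d₂ d : ℝ} (h : d₁ - d₂ = d) (t : ℝ) :
    exp (-I * d₁ * t) * starRingEnd ℂ (exp (-I * d₂ * t)) = exp (-I * d * t) := by
  rw [← exp_conj, ← exp_add, ← h]
  congr 1
  simp only [map_mul, map_neg, conj_I, conj_ofReal, ofReal_sub]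
  ring

theorem stmt_9_general (a₀ b₀ p₀ M P ω : ℝ)
    (hdisc : 0 ≤ (M + P) ^ 2 - 4 * P * a₀ ^ 2)
    (hω : ω = (1 / 2) * Real.sqrt ((M + P) ^ 2 - 4 * P * a₀ ^ 2))
    (hωne : ω ≠ 0)
    (a b p : ℝ → ℂ)
    (ha : ∀ t : ℝ, a t = (a₀ : ℂ) * Complex.exp (-Complex.I * M * t))
    (hb : ∀ t : ℝ, b t =
      ((b₀ : ℂ) * Real.cos (ω * t) -
        Complex.I * ((b₀ * (M + P) + 2 * a₀ * p₀ * P) / (2 * ω) : ℝ) * Real.sin (ω * t)) *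
        Complex.exp (-Complex.I * ((M + P) / 2 : ℝ) * t))
    (hp : ∀ t : ℝ, p t =
      ((p₀ : ℂ) * Real.cos (ω * t) -
        Complex.I * ((p₀ * (M + P) + 2 * a₀ * b₀) / (2 * ω) : ℝ) * Real.sin (ω * t)) *
        Complex.exp (-Complex.I * ((M - P) / 2 : ℝ) * t)) :
    ∀ t : ℝ,
      Complex.I * deriv a t = (M : ℂ) * a t ∧
      Complex.I * deriv b t = ((M : ℂ) + P) * b t + (P : ℂ) * a t * (starRingEnd ℂ) (p t) ∧
      Complex.I * deriv p t = (M : ℂ) * p t + a t * (starRingEnd ℂ) (b t) := by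
  intro t
  set cb := (b₀ * (M + P) + 2 * a₀ * p₀ * P) / (2 * ω) with hcb_def
  set cp := (p₀ * (M + P) + 2 * a₀ * b₀) / (2 * ω) with hcp_def
  have hω2 : ω ^ 2 = ((M + P) / 2) ^ 2 - P * a₀ * a₀ := by
    rw [hω, mul_pow, Real.sq_sqrt hdisc]; ring
  have hcb : ω * cb = (M + P) / 2 * b₀ + P * a₀ * p₀ := by rw [hcb_def]; field_simp
  have hcp : ω * cp = (M + P) / 2 * p₀ + a₀ * b₀ := by rw [hcp_def]; field_simp
  have hb' : ∀ s, b s = cosSubISin b₀ cb ω s * exp (-I * ((M + P) / 2 : ℝ) * s) := hb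
  have hp' : ∀ s, p s = cosSubISin p₀ cp ω s * exp (-I * ((M - P) / 2 : ℝ) * s) := hp
  have hda := I_mul_deriv_eq_of_eq_mul_exp (hasDerivAt_const t (a₀ : ℂ)) ha
  have hdb := I_mul_deriv_eq_of_eq_mul_exp (hasDerivAt_cosSubISin b₀ cb ω t) hb'
  have hdp := I_mul_deriv_eq_of_eq_mul_exp (hasDerivAt_cosSubISin p₀ cp ω t) hp'
  have hub := cosSubISin_swap_eq hωne hω2 hcb hcp t
  have hup := cosSubISin_swap_eq hωne (by linear_combination hω2) hcp hcb t
  have hphase_b := exp_mul_conj_exp (d₁ := M) (d₂ := (M - P) / 2) (d := (M + P) / 2) (by ring) t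
  have hphase_p := exp_mul_conj_exp (d₁ := M) (d₂ := (M + P) / 2) (d := (M - P) / 2) (by ring) t
  refine ⟨?_, ?_, ?_⟩
  · rw [hda, ha]; ring
  · rw [hdb, hb', ha, hp', map_mul]
    linear_combination (norm := (push_cast; ring))
      exp (-I * ((M + P) / 2 : ℝ) * t) * (hub - ω * cosSubISin cb b₀ ω t * I_sq)
        - P * a₀ * starRingEnd ℂ (cosSubISin p₀ cp ω t) * hphase_b
  · rw [hdp, hp', ha, hb', map_mul]
    linear_combination (norm := (push_cast; ring))
      exp (-I * ((M - P) / 2 : ℝ) * t) * (hup - ω * cosSubISin cp p₀ ω t * I_sq)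
        - a₀ * starRingEnd ℂ (cosSubISin b₀ cb ω t) * hphase_p

theorem stmt_9 (a₀ b₀ p₀ M P ω : ℝ) (hp₀ : |p₀| < 1)
    (hM : M = b₀ ^ 2 + (a₀ + b₀ * p₀) ^ 2 / (1 - p₀ ^ 2))
    (hP : P = (a₀ + b₀ * p₀) ^ 2 / (1 - p₀ ^ 2) ^ 2)
    (hMpos : 0 < M) (hPpos : 0 < P)
    (hdisc : 0 ≤ (M + P) ^ 2 - 4 * P * a₀ ^ 2)
    (hω : ω = (1 / 2) * Real.sqrt ((M + P) ^ 2 - 4 * P * a₀ ^ 2))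
    (hωne : ω ≠ 0)
    (a b p : ℝ → ℂ)
    (ha : ∀ t : ℝ, a t = (a₀ : ℂ) * Complex.exp (-Complex.I * M * t))
    (hb : ∀ t : ℝ, b t =
      ((b₀ : ℂ) * Real.cos (ω * t) -
        Complex.I * ((b₀ * (M + P) + 2 * a₀ * p₀ * P) / (2 * ω) : ℝ) * Real.sin (ω * t)) *
        Complex.exp (-Complex.I * ((M + P) / 2 : ℝ) * t))
    (hp : ∀ t : ℝ, p t =
      ((p₀ : ℂ) * Real.cos (ω * t) -
        Complex.I * ((p₀ * (M + P) + 2 * a₀ * b₀) / (2 * ω) : ℝ) * Real.sin (ω * t)) *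
        Complex.exp (-Complex.I * ((M - P) / 2 : ℝ) * t)) :
    ∀ t : ℝ,
      Complex.I * deriv a t = (M : ℂ) * a t ∧
      Complex.I * deriv b t = ((M : ℂ) + P) * b t + (P : ℂ) * a t * (starRingEnd ℂ) (p t) ∧
      Complex.I * deriv p t = (M : ℂ) * p t + a t * (starRingEnd ℂ) (b t) :=
  stmt_9_general a₀ b₀ p₀ M P ω hdisc hω hωne a b p ha hb hp
end

section
/- Suppose a, b, p : ℝ → ℂ satisfy the Szegő single-pole equations i ȧ = M a, i ḃ = (M+P) b + P a conj(p), i ṗ = M p + a conj(b), where M = |b|² + |a+bp|²/(1-|p|²) and P = |a+bp|²/(1-|p|²)² (with |p(t)| < 1 for all t). Then M and P are constant in time. -/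
/-!
Put `w = Im (a b̄ p̄)`. Along the flow, `d|p|²/dt = 2w`, `d|b|²/dt = 2Pw` and
`d|a + bp|²/dt = -2 ((M - |b|²) + P (1 - |p|²)) w = -4 (|a + bp|² / (1 - |p|²)) w`,
and with these three rates the derivatives of `M` and `P` cancel identically.
-/

open Complex ComplexConjugate

lemma hasDerivAt_neg_I_mul_of_I_mul_deriv_eq {f : ℝ → ℂ} {t : ℝ} {v : ℂ}
    (hf : DifferentiableAt ℝ f t) (h : I * deriv f t = v) : HasDerivAt f (-I * v) t := by
  rw [← h, ← mul_assoc, neg_mul, I_mul_I, neg_neg, one_mul]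
  exact hf.hasDerivAt

section SzegoVelocity

variable (a b p : ℂ) (m q : ℝ)

lemma inner_szegoVelocity_p :
    inner ℝ p (-I * (m * p + a * conj b)) = (a * conj b * conj p).im := by
  simp only [Complex.inner, mul_re, mul_im, neg_re, neg_im, I_re, I_im, add_re, add_im,
    ofReal_re, ofReal_im, conj_re, conj_im]
  ring

lemma inner_szegoVelocity_b :
    inner ℝ b (-I * ((m + q) * b + q * a * conj p)) = q * (a * conj b * conj p).im := by
  simp only [Complex.inner, mul_re, mul_im, neg_re, neg_im, I_re, I_im, add_re, add_im,
    ofReal_re, ofReal_im, conj_re, conj_im]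
  ring

lemma inner_szegoVelocity_add_mul :
    inner ℝ (a + b * p) (-I * (m * a) + (-I * ((m + q) * b + q * a * conj p) * p
      + b * (-I * (m * p + a * conj b))))
      = -(m - ‖b‖ ^ 2 + q * (1 - ‖p‖ ^ 2)) * (a * conj b * conj p).im := by
  simp only [Complex.inner, Complex.sq_norm, normSq_apply, mul_re, mul_im, neg_re, neg_im,
    I_re, I_im, add_re, add_im, ofReal_re, ofReal_im, conj_re, conj_im]
  ring

end SzegoVelocity

section Conservation

variable {B Q N : ℝ → ℝ} {t w : ℝ}

lemma hasDerivAt_add_div_one_sub_eq_zero (hN : HasDerivAt N (2 * w) t) (hN1 : 1 - N t ≠ 0)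
    (hQ : HasDerivAt Q (-4 * (Q t / (1 - N t)) * w) t)
    (hB : HasDerivAt B (2 * (Q t / (1 - N t) ^ 2) * w) t) :
    HasDerivAt (fun s => B s + Q s / (1 - N s)) 0 t := by
  refine (hB.add (hQ.div (hN.const_sub 1) hN1)).congr_deriv ?_
  field_simp
  ring

lemma hasDerivAt_div_one_sub_sq_eq_zero (hN : HasDerivAt N (2 * w) t) (hN1 : 1 - N t ≠ 0)
    (hQ : HasDerivAt Q (-4 * (Q t / (1 - N t)) * w) t) :
    HasDerivAt (fun s => Q s / (1 - N s) ^ 2) 0 t := by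
  refine (hQ.div ((hN.const_sub 1).pow 2) (pow_ne_zero 2 hN1)).congr_deriv ?_
  simp only [Pi.pow_apply]
  field_simp
  ring

end Conservation

theorem stmt_10 (a b p : ℝ → ℂ) (M P : ℝ → ℝ)
    (hda : Differentiable ℝ a) (hdb : Differentiable ℝ b) (hdp : Differentiable ℝ p)
    (hpbound : ∀ t : ℝ, ‖p t‖ < 1)
    (hM : ∀ t : ℝ, M t = ‖b t‖ ^ 2 +
      ‖a t + b t * p t‖ ^ 2 / (1 - ‖p t‖ ^ 2))
    (hP : ∀ t : ℝ, P t = ‖a t + b t * p t‖ ^ 2 / (1 - ‖p t‖ ^ 2) ^ 2)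
    (ha : ∀ t : ℝ, Complex.I * deriv a t = (M t : ℂ) * a t)
    (hb : ∀ t : ℝ, Complex.I * deriv b t =
      ((M t : ℂ) + (P t : ℂ)) * b t + (P t : ℂ) * a t * (starRingEnd ℂ) (p t))
    (hp : ∀ t : ℝ, Complex.I * deriv p t = (M t : ℂ) * p t + a t * (starRingEnd ℂ) (b t)) :
    ∀ t : ℝ, deriv M t = 0 ∧ deriv P t = 0 := by
  intro t
  set w := (a t * conj (b t) * conj (p t)).im with hw
  have hD : 1 - ‖p t‖ ^ 2 ≠ 0 :=
    (sub_pos.2 ((sq_lt_one_iff₀ (norm_nonneg _)).2 (hpbound t))).ne'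
  have ha' := hasDerivAt_neg_I_mul_of_I_mul_deriv_eq (hda t) (ha t)
  have hb' := hasDerivAt_neg_I_mul_of_I_mul_deriv_eq (hdb t) (hb t)
  have hp' := hasDerivAt_neg_I_mul_of_I_mul_deriv_eq (hdp t) (hp t)
  have hnormp : HasDerivAt (fun s => ‖p s‖ ^ 2) (2 * w) t := by
    simpa only [inner_szegoVelocity_p] using hp'.norm_sq
  have hnormb : HasDerivAt (fun s => ‖b s‖ ^ 2)
      (2 * (‖a t + b t * p t‖ ^ 2 / (1 - ‖p t‖ ^ 2) ^ 2) * w) t := by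
    refine hb'.norm_sq.congr_deriv ?_
    rw [inner_szegoVelocity_b, hP t]
    ring
  have hnormu : HasDerivAt (fun s => ‖a s + b s * p s‖ ^ 2)
      (-4 * (‖a t + b t * p t‖ ^ 2 / (1 - ‖p t‖ ^ 2)) * w) t := by
    refine (ha'.add (hb'.mul hp')).norm_sq.congr_deriv ?_
    rw [Pi.add_apply, Pi.mul_apply, inner_szegoVelocity_add_mul, ← hw, hM t, hP t]
    field_simp
    ring
  have hMfun : M = fun s => ‖b s‖ ^ 2 + ‖a s + b s * p s‖ ^ 2 / (1 - ‖p s‖ ^ 2) := funext hM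
  have hPfun : P = fun s => ‖a s + b s * p s‖ ^ 2 / (1 - ‖p s‖ ^ 2) ^ 2 := funext hP
  constructor
  · rw [hMfun]
    exact (hasDerivAt_add_div_one_sub_eq_zero hnormp hD hnormu hnormb).deriv
  · rw [hPfun]
    exact (hasDerivAt_div_one_sub_sq_eq_zero hnormp hD hnormu).deriv
end

section
/- For every n ∈ ℕ and |p| < 1, ∑_{j=0}^∞ ∑_{k=0}^{n+j} (min(n,j,k,n+j-k)+1) |p|^{2j} = (n+1)/(1-|p|²)². -/
open Finset

/-!
The weight `min(n, j, k, n + j - k) + 1` is the number of lattice points `(x, y)` of the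
rectangle `[0, n] × [0, j]` on the line `x + y = k`, so summing it over `k` counts the whole
rectangle: the `j`-th term is `(n + 1) (j + 1) ‖p‖ ^ (2 j)`, and
`∑ (j + 1) r ^ j = 1 / (1 - r) ^ 2` finishes the computation.
-/

theorem card_filter_range_product_add_eq {n j k : ℕ} (hk : k ≤ n + j) :
    #{a ∈ range (n + 1) ×ˢ range (j + 1) | a.1 + a.2 = k} =
      min (min n j) (min k (n + j - k)) + 1 := by
  have hfiber : {a ∈ range (n + 1) ×ˢ range (j + 1) | a.1 + a.2 = k} =
      (Icc (k - j) (min n k)).map ⟨fun i => (i, k - i), fun _ _ h => congrArg Prod.fst h⟩ := by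
    ext ⟨x, y⟩
    simp only [mem_filter, mem_product, mem_range, mem_map, mem_Icc]
    constructor
    · rintro ⟨⟨hx, hy⟩, rfl⟩
      exact ⟨x, ⟨by omega, by omega⟩, Prod.ext rfl (show x + y - x = y by omega)⟩
    · rintro ⟨i, hi, rfl, rfl⟩
      omega
  rw [hfiber, card_map, Nat.card_Icc]
  omega

theorem sum_min_add_one_eq_mul (n j : ℕ) :
    ∑ k ∈ range (n + j + 1), (min (min n j) (min k (n + j - k)) + 1) = (n + 1) * (j + 1) := by
  have hmaps : ∀ a ∈ range (n + 1) ×ˢ range (j + 1), a.1 + a.2 ∈ range (n + j + 1) := by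
    intro a ha
    simp only [mem_product, mem_range] at ha ⊢
    omega
  calc ∑ k ∈ range (n + j + 1), (min (min n j) (min k (n + j - k)) + 1)
      = ∑ k ∈ range (n + j + 1), #{a ∈ range (n + 1) ×ˢ range (j + 1) | a.1 + a.2 = k} :=
        sum_congr rfl fun k hk =>
          (card_filter_range_product_add_eq (Nat.lt_succ_iff.mp (mem_range.mp hk))).symm
    _ = #(range (n + 1) ×ˢ range (j + 1)) := (card_eq_sum_card_fiberwise hmaps).symm
    _ = (n + 1) * (j + 1) := by rw [card_product, card_range, card_range]

theorem hasSum_succ_mul_geometric {𝕜 : Type*} [NormedField 𝕜] [CompleteSpace 𝕜] {r : 𝕜}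
    (hr : ‖r‖ < 1) : HasSum (fun j : ℕ => ((j : 𝕜) + 1) * r ^ j) (1 / (1 - r) ^ 2) := by
  have hr1 : 1 - r ≠ 0 := sub_ne_zero.mpr fun h => by simp [← h] at hr
  convert (hasSum_coe_mul_geometric_of_norm_lt_one hr).add (hasSum_geometric_of_norm_lt_one hr)
    using 1
  · ext j
    ring
  · field_simp
    ring

theorem stmt_11 (n : ℕ) (p : ℂ) (hp : ‖p‖ < 1) :
    HasSum (fun j : ℕ => ∑ k ∈ Finset.range (n + j + 1),
        ((min (min n j) (min k (n + j - k)) + 1 : ℕ) : ℝ) * ‖p‖ ^ (2 * j))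
      (((n : ℝ) + 1) / (1 - ‖p‖ ^ 2) ^ 2) := by
  have hp2 : ‖‖p‖ ^ 2‖ < 1 := by
    rw [norm_pow, norm_norm]
    exact pow_lt_one₀ (norm_nonneg p) hp two_ne_zero
  have hgeom := (hasSum_succ_mul_geometric hp2).mul_left ((n : ℝ) + 1)
  rw [mul_one_div] at hgeom
  refine hgeom.congr_fun fun j => ?_
  rw [← sum_mul, ← Nat.cast_sum, sum_min_add_one_eq_mul, pow_mul]
  push_cast
  ring
end

section
/- For every n ∈ ℕ and |p| < 1, ∑_{j=0}^∞ ∑_{k=0}^{n+j} (min(n,j,k,n+j-k)+1) · k · |p|^{2j} = n(n+1)/(2(1-|p|²)²) + (n+1)|p|²/(1-|p|²)³. -/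
open Finset

/-!
Among the pairs `(a, b) ∈ [0, n] × [0, j]`, exactly `min(n, j, k, n + j - k) + 1` have
`a + b = k`. Hence the inner sum is `∑_{a ≤ n, b ≤ j} (a + b) = (n + 1)(j + 1)(n + j) / 2`, and
the outer series in `x = |p|²` splits into the binomial series `∑ (j + 1) x^j = (1 - x)⁻²` and
`∑ (j + 2 choose 2) x^j = (1 - x)⁻³`.
-/

lemma card_range_product_filter_add_eq (n j k : ℕ) (hk : k ≤ n + j) :
    #{ab ∈ range (n + 1) ×ˢ range (j + 1) | ab.1 + ab.2 = k} =
      min (min n j) (min k (n + j - k)) + 1 := by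
  have fiber_eq : {ab ∈ range (n + 1) ×ˢ range (j + 1) | ab.1 + ab.2 = k} =
      (Icc (k - j) (min n k)).image (fun a => (a, k - a)) := by
    ext ⟨a, b⟩
    simp only [mem_filter, mem_product, mem_range, mem_image, mem_Icc, Prod.mk.injEq]
    constructor
    · rintro ⟨⟨ha, hb⟩, rfl⟩
      exact ⟨a, by omega, rfl, by omega⟩
    · rintro ⟨a, ha, rfl, rfl⟩
      omega
  rw [fiber_eq, card_image_of_injective _ fun a b h => congrArg Prod.fst h, Nat.card_Icc]
  omega

lemma sum_min_add_one_mul_eq_sum_product (n j : ℕ) :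
    ∑ k ∈ range (n + j + 1), (min (min n j) (min k (n + j - k)) + 1) * k =
      ∑ ab ∈ range (n + 1) ×ˢ range (j + 1), (ab.1 + ab.2) := by
  rw [← sum_fiberwise_of_maps_to (g := fun ab : ℕ × ℕ => ab.1 + ab.2)
    (t := range (n + j + 1)) fun ab hab => by simp only [mem_product, mem_range] at hab ⊢; omega]
  refine sum_congr rfl fun k hk => ?_
  rw [sum_congr rfl fun ab hab => (mem_filter.1 hab).2, sum_const, smul_eq_mul,
    card_range_product_filter_add_eq n j k (Nat.lt_succ_iff.1 (mem_range.1 hk))]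

lemma sum_range_product_add_mul_two (n j : ℕ) :
    (∑ ab ∈ range (n + 1) ×ˢ range (j + 1), (ab.1 + ab.2)) * 2 = (n + 1) * (j + 1) * (n + j) := by
  have gauss (m : ℕ) : (∑ i ∈ range (m + 1), i) * 2 = (m + 1) * m := by
    rw [sum_range_id_mul_two, Nat.add_sub_cancel, mul_comm]
  simp only [sum_product, sum_add_distrib, sum_const, card_range, smul_eq_mul]
  rw [← mul_sum, add_mul, mul_assoc, mul_assoc, gauss n, gauss j]
  ring

lemma hasSum_cubic_mul_geometric {x : ℝ} (hx : ‖x‖ < 1) (n : ℕ) :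
    HasSum (fun j : ℕ => ((n : ℝ) + 1) * ((j : ℝ) + 1) * ((n : ℝ) + j) / 2 * x ^ j)
      ((n : ℝ) * ((n : ℝ) + 1) / (2 * (1 - x) ^ 2) + ((n : ℝ) + 1) * x / (1 - x) ^ 3) := by
  have linear := hasSum_choose_mul_geometric_of_norm_lt_one 1 hx
  have quadratic := hasSum_choose_mul_geometric_of_norm_lt_one 2 hx
  -- `(n + 1)(j + 1)(n + j) / 2 = (n + 1)(n - 2) / 2 · (j + 1) + (n + 1) · (j + 2 choose 2)`
  have combined :=
    (linear.mul_left (((n : ℝ) + 1) * (n - 2) / 2)).add (quadratic.mul_left ((n : ℝ) + 1))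
  convert combined using 1
  · rfl
  · funext j
    rw [Nat.choose_one_right, Nat.cast_choose_two]
    push_cast
    ring
  · have hx' : (1 : ℝ) - x ≠ 0 := by linarith [le_abs_self x, Real.norm_eq_abs x]
    field_simp
    ring

theorem stmt_12 (n : ℕ) (p : ℂ) (hp : ‖p‖ < 1) :
    HasSum (fun j : ℕ => ∑ k ∈ Finset.range (n + j + 1),
        ((min (min n j) (min k (n + j - k)) + 1 : ℕ) : ℝ) * (k : ℝ) * ‖p‖ ^ (2 * j))
      ((n : ℝ) * ((n : ℝ) + 1) / (2 * (1 - ‖p‖ ^ 2) ^ 2) +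
        ((n : ℝ) + 1) * ‖p‖ ^ 2 / (1 - ‖p‖ ^ 2) ^ 3) := by
  have hx : ‖‖p‖ ^ 2‖ < 1 := by
    rw [norm_pow, norm_norm]
    exact pow_lt_one₀ (norm_nonneg p) hp two_ne_zero
  convert hasSum_cubic_mul_geometric hx n using 2 with j
  have inner_sum : ∑ k ∈ range (n + j + 1),
      ((min (min n j) (min k (n + j - k)) + 1 : ℕ) : ℝ) * (k : ℝ) * 2 =
        ((n : ℝ) + 1) * ((j : ℝ) + 1) * ((n : ℝ) + j) := by
    rw [← sum_mul]
    exact_mod_cast (sum_min_add_one_mul_eq_sum_product n j).symm ▸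
      sum_range_product_add_mul_two n j
  rw [← inner_sum, pow_mul]
  simp only [← sum_mul]
  ring
end

section
/- For every n ∈ ℕ and |p| < 1, ∑_{j=0}^∞ ∑_{k=0}^{n+j} (min(n,j,k,n+j-k)+1) · k² · |p|^{2j} = n(n+1)(2n+1)/(6(1-|p|²)²) + (n+1)²|p|²/(1-|p|²)³ + 2(n+1)|p|⁴/(1-|p|²)⁴. -/
open Finset

/-!
The weight `min (min n j) (min k (n + j - k)) + 1` counts the pairs `(a, b) ∈ [0, n] × [0, j]`
with `a + b = k`, so the inner sum is `∑ a ≤ n, ∑ b ≤ j, (a + b) ^ 2`, a cubic polynomial in `j`.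
Writing it in the basis `C(j+3,3), C(j+2,2), C(j+1,1)`, whose generating functions are
`(1 - r)⁻⁴, (1 - r)⁻³, (1 - r)⁻²`, gives the series in closed form; then put `r = |p|²`.
-/

theorem sum_range_sum_range_add {M : Type*} [AddCommMonoid M] (f : ℕ → M) (m n : ℕ) :
    ∑ a ∈ range (m + 1), ∑ b ∈ range (n + 1), f (a + b) =
      ∑ k ∈ range (m + n + 1), (min (min m n) (min k (m + n - k)) + 1) • f k := by
  have shift (a : ℕ) (ha : a ∈ range (m + 1)) : ∑ b ∈ range (n + 1), f (a + b) =
      ∑ k ∈ range (m + n + 1) with a ≤ k ∧ k < a + n + 1, f k := by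
    simp only [mem_range] at ha
    have hIco : {k ∈ range (m + n + 1) | a ≤ k ∧ k < a + n + 1} = Ico a (a + n + 1) := by
      ext k; simp only [mem_filter, mem_range, mem_Ico]; omega
    rw [hIco, sum_Ico_eq_sum_range, show a + n + 1 - a = n + 1 by omega]
  rw [sum_congr rfl shift]
  simp only [sum_filter]
  rw [sum_comm]
  refine sum_congr rfl fun k hk => ?_
  have hIcc : {a ∈ range (m + 1) | a ≤ k ∧ k < a + n + 1} = Icc (k - n) (min m k) := by
    ext a; simp only [mem_filter, mem_range, mem_Icc]; omega
  rw [← sum_filter, hIcc, sum_const, Nat.card_Icc]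
  simp only [mem_range] at hk
  congr 1
  omega

section CharZeroField

variable {K : Type*} [Field K] [CharZero K]

theorem sum_range_add_sq (a : K) (n : ℕ) :
    ∑ b ∈ range (n + 1), (a + b) ^ 2 =
      (n + 1) * a ^ 2 + a * (n * (n + 1)) + n * (n + 1) * (2 * n + 1) / 6 := by
  induction n with
  | zero => simp
  | succ n ih =>
    rw [sum_range_succ, ih]
    push_cast
    ring

theorem sum_range_sum_range_add_sq (m n : ℕ) :
    ∑ a ∈ range (m + 1), ∑ b ∈ range (n + 1), ((a : K) + b) ^ 2 =
      (n + 1) * (m * (m + 1) * (2 * m + 1) / 6) + m * (m + 1) / 2 * (n * (n + 1)) +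
        (m + 1) * (n * (n + 1) * (2 * n + 1) / 6) := by
  induction m with
  | zero => simp [sum_range_add_sq]
  | succ m ih =>
    rw [sum_range_succ, ih, sum_range_add_sq]
    push_cast
    ring

theorem cast_add_three_choose_three (n : ℕ) :
    ((n + 3).choose 3 : K) = (n + 1) * (n + 2) * (n + 3) / 6 := by
  have h : ((n + 3).choose 3 : K) * 3 = (n + 3) * ((n + 2).choose 2 : K) := by
    exact_mod_cast (Nat.add_one_mul_choose_eq (n + 2) 2).symm
  rw [Nat.cast_choose_two] at h
  push_cast at h
  linear_combination h / 3

theorem sum_range_min_add_one_mul_sq (m n : ℕ) :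
    ∑ k ∈ range (m + n + 1), ((min (min m n) (min k (m + n - k)) + 1 : ℕ) : K) * (k : K) ^ 2 =
      (n + 1) * (m * (m + 1) * (2 * m + 1) / 6) + m * (m + 1) / 2 * (n * (n + 1)) +
        (m + 1) * (n * (n + 1) * (2 * n + 1) / 6) := by
  rw [← sum_range_sum_range_add_sq]
  simpa only [nsmul_eq_mul, Nat.cast_add] using
    (sum_range_sum_range_add (fun k => (k : K) ^ 2) m n).symm

end CharZeroField

theorem hasSum_sum_range_min_add_one_mul_sq_mul_geometric {𝕜 : Type*} [NormedField 𝕜]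
    [CompleteSpace 𝕜] [CharZero 𝕜] (n : ℕ) {r : 𝕜} (hr : ‖r‖ < 1) :
    HasSum (fun j : ℕ => ∑ k ∈ range (n + j + 1),
        ((min (min n j) (min k (n + j - k)) + 1 : ℕ) : 𝕜) * (k : 𝕜) ^ 2 * r ^ j)
      (n * (n + 1) * (2 * n + 1) / (6 * (1 - r) ^ 2) + (n + 1) ^ 2 * r / (1 - r) ^ 3 +
        2 * (n + 1) * r ^ 2 / (1 - r) ^ 4) := by
  have hr1 : 1 - r ≠ 0 := fun h => by simp [← sub_eq_zero.mp h] at hr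
  have h3 := (hasSum_choose_mul_geometric_of_norm_lt_one 3 hr).mul_left (2 * (n + 1 : 𝕜))
  have h2 := (hasSum_choose_mul_geometric_of_norm_lt_one 2 hr).mul_left
    ((n : 𝕜) * (n + 1) - 3 * (n + 1))
  have h1 := (hasSum_choose_mul_geometric_of_norm_lt_one 1 hr).mul_left
    ((n : 𝕜) * (n + 1) * (2 * n + 1) / 6 - n * (n + 1) + (n + 1))
  convert! ((h3.add h2).add h1).congr_fun fun j => ?_ using 1
  · field_simp
    ring
  · rw [← sum_mul, sum_range_min_add_one_mul_sq, cast_add_three_choose_three, Nat.cast_choose_two,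
      Nat.choose_one_right]
    push_cast
    ring

theorem stmt_13 (n : ℕ) (p : ℂ) (hp : ‖p‖ < 1) :
    HasSum (fun j : ℕ => ∑ k ∈ Finset.range (n + j + 1),
        ((min (min n j) (min k (n + j - k)) + 1 : ℕ) : ℝ) * (k : ℝ) ^ 2 * ‖p‖ ^ (2 * j))
      ((n : ℝ) * ((n : ℝ) + 1) * (2 * (n : ℝ) + 1) / (6 * (1 - ‖p‖ ^ 2) ^ 2) +
        ((n : ℝ) + 1) ^ 2 * ‖p‖ ^ 2 / (1 - ‖p‖ ^ 2) ^ 3 +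
        2 * ((n : ℝ) + 1) * ‖p‖ ^ 4 / (1 - ‖p‖ ^ 2) ^ 4) := by
  have hq : ‖‖p‖ ^ 2‖ < 1 := by
    rw [norm_pow, norm_norm]
    exact pow_lt_one₀ (norm_nonneg p) hp two_ne_zero
  simpa only [← pow_mul, Nat.reduceMul] using hasSum_sum_range_min_add_one_mul_sq_mul_geometric n hq
end

section
/- Let Q, E, S be real numbers with S ≥ 0, Q ≥ 2S, E > 0, and suppose y₋ ≤ y₊ are the two real roots of the quadratic y² + (1 - E(Q+2S)/(Q²+12S²)) y + (E-Q-2S)²/(4(Q²+12S²)) = 0, both ≥ 0. Then (1+y₊)/(1+y₋) ≤ 16. -/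
/-!
Write `A = Q + 2S` and `D = Q² + 12S²`. By Vieta, the shifted roots `u = 1 + y₊`, `v = 1 + y₋`
have sum `(D + EA)/D` and product `(E + A)²/(4D)`. Since `64/289 ≤ D/A² ≤ 289/64`, this gives
`16 (u + v)² ≤ 17² uv`, and for `v > 0` that inequality confines `u/v` to `[1/16, 16]`.
-/

lemma div_le_of_mul_sq_add_le {u v k : ℝ} (hk : 1 ≤ k) (hv : 0 < v)
    (h : k * (u + v) ^ 2 ≤ (k + 1) ^ 2 * (u * v)) : u / v ≤ k := by
  rw [div_le_iff₀ hv]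
  by_contra! hlt
  have hku : 0 < k * u - v := by
    nlinarith [mul_lt_mul_of_pos_left hlt (by linarith : (0:ℝ) < k), mul_le_mul_of_nonneg_right
      (by nlinarith : 1 ≤ k * k) hv.le]
  -- `(k + 1)² uv - k (u + v)² = -(u - k v)(k u - v)`
  nlinarith [mul_pos (sub_pos.2 hlt) hku]

lemma mul_sq_add_mul_le {A D E : ℝ} (hD : 0 ≤ D) (hA : 0 ≤ A) (hE : 0 ≤ E)
    (hAD : 64 * A ^ 2 ≤ 289 * D) (hDA : 64 * D ≤ 289 * A ^ 2) :
    64 * (D + E * A) ^ 2 ≤ 289 * D * (E + A) ^ 2 := by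
  nlinarith [mul_nonneg (mul_nonneg hD hE) hA, mul_nonneg (sq_nonneg E) (sub_nonneg.2 hAD),
    mul_nonneg hD (sub_nonneg.2 hDA)]

lemma mul_sq_add_le_of_vieta {A D E yp ym : ℝ} (hD : 0 < D) (hA : 0 ≤ A) (hE : 0 ≤ E)
    (hAD : 64 * A ^ 2 ≤ 289 * D) (hDA : 64 * D ≤ 289 * A ^ 2)
    (hsum : yp + ym = E * A / D - 1) (hprod : yp * ym = (E - A) ^ 2 / (4 * D)) :
    16 * ((1 + yp) + (1 + ym)) ^ 2 ≤ 289 * ((1 + yp) * (1 + ym)) := by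
  have hsum' : (1 + yp) + (1 + ym) = (D + E * A) / D := by
    rw [show (1 + yp) + (1 + ym) = 2 + (yp + ym) by ring, hsum]
    field_simp
    ring
  have hprod' : (1 + yp) * (1 + ym) = (E + A) ^ 2 / (4 * D) := by
    rw [show (1 + yp) * (1 + ym) = 1 + (yp + ym) + yp * ym by ring, hsum, hprod]
    field_simp
    ring
  rw [hsum', hprod', div_pow, ← mul_div_assoc, ← mul_div_assoc,
    div_le_div_iff₀ (by positivity) (by positivity)]
  nlinarith [mul_sq_add_mul_le hD.le hA hE hAD hDA, hD]

theorem stmt_16_general (Q E S ym yp : ℝ) (hS : 0 ≤ S) (hQpos : 0 < Q)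
    (hE : 0 < E) (hm : 0 ≤ ym)
    (hvieta_sum : yp + ym = E * (Q + 2 * S) / (Q ^ 2 + 12 * S ^ 2) - 1)
    (hvieta_prod : yp * ym = (E - Q - 2 * S) ^ 2 / (4 * (Q ^ 2 + 12 * S ^ 2))) :
    (1 + yp) / (1 + ym) ≤ 16 := by
  have hbound := mul_sq_add_le_of_vieta (by positivity) (by positivity) hE.le
    (by nlinarith [sq_nonneg (Q - S), sq_nonneg S]) (by nlinarith [mul_nonneg hQpos.le hS])
    hvieta_sum (hvieta_prod.trans (by ring))
  exact div_le_of_mul_sq_add_le (k := 16) (by norm_num) (by linarith) (by linarith)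

theorem stmt_16 (Q E S ym yp : ℝ) (hS : 0 ≤ S) (hQ : 2 * S ≤ Q) (hQpos : 0 < Q)
    (hE : 0 < E) (hle : ym ≤ yp) (hm : 0 ≤ ym) (hp : 0 ≤ yp)
    (hrootm : ym ^ 2 + (1 - E * (Q + 2 * S) / (Q ^ 2 + 12 * S ^ 2)) * ym +
      (E - Q - 2 * S) ^ 2 / (4 * (Q ^ 2 + 12 * S ^ 2)) = 0)
    (hrootp : yp ^ 2 + (1 - E * (Q + 2 * S) / (Q ^ 2 + 12 * S ^ 2)) * yp +
      (E - Q - 2 * S) ^ 2 / (4 * (Q ^ 2 + 12 * S ^ 2)) = 0)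
    (hvieta_sum : yp + ym = E * (Q + 2 * S) / (Q ^ 2 + 12 * S ^ 2) - 1)
    (hvieta_prod : yp * ym = (E - Q - 2 * S) ^ 2 / (4 * (Q ^ 2 + 12 * S ^ 2))) :
    (1 + yp) / (1 + ym) ≤ 16 :=
  stmt_16_general Q E S ym yp hS hQpos hE hm hvieta_sum hvieta_prod
end

section
/- Suppose b, a, p : ℝ → ℂ (|p| < 1) satisfy the three-dimensional conformal flow ODEs i ṗ/(1+y)² = (p/6)(2y|a|² + conj(b)a) and i ȧ/(1+y)² = (a/6)(5|b|² + (18y²+4y)|a|² + (6y-1)conj(b)a + 10y conj(a)b), with y = |p|²/(1-|p|²). Then S = |a|² y (1+y)³ is constant in time. -/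
/-!
Put `c = Im (conj b * a)`. Since `Re (-I * w) = Im w`, the equations give
`d|p|²/dt = (1+y)² |p|² c / 3` and, as `Im (conj a * b) = -c`, `d|a|²/dt = -(1+y)² (4y+1) |a|² c / 3`;
with `y = |p|²/(1-|p|²)` also `dy/dt = (1+y)³ y c / 3`. The logarithmic derivative of `|a|² y (1+y)³`
is then `(1+y)² c / 3 * (-(4y+1) + (1+y) + 3y) = 0`.
-/

open Complex ComplexConjugate

lemma two_mul_re_mul_conj_of_flow {f f' g : ℂ} {c : ℝ} (hc : c ≠ 0)
    (h : I * f' / (c : ℂ) ^ 2 = f / 6 * g) :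
    2 * (f' * conj f).re = c ^ 2 * ‖f‖ ^ 2 / 3 * g.im := by
  have hf' : f' = -I * (c : ℂ) ^ 2 * (f / 6 * g) := by
    rw [div_eq_iff (by exact_mod_cast pow_ne_zero 2 hc)] at h
    linear_combination -I * h + f' * I_sq
  have : f' * conj f = -I * ((c ^ 2 * ‖f‖ ^ 2 / 6 : ℝ) : ℂ) * g := by
    rw [hf']; push_cast; linear_combination (-I * c ^ 2 * g / 6) * mul_conj' f
  rw [this, mul_re, mul_re, mul_im]
  simp only [neg_re, I_re, ofReal_re, neg_im, I_im, ofReal_im]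
  ring

lemma hasDerivAt_norm_sq_of_flow {f : ℝ → ℂ} {g : ℂ} {c t : ℝ} (hf : DifferentiableAt ℝ f t)
    (hc : c ≠ 0) (h : I * deriv f t / (c : ℂ) ^ 2 = f t / 6 * g) :
    HasDerivAt (‖f ·‖ ^ 2) (c ^ 2 * ‖f t‖ ^ 2 / 3 * g.im) t := by
  simpa only [Complex.inner, two_mul_re_mul_conj_of_flow hc h] using hf.hasDerivAt.norm_sq

lemma HasDerivAt.div_one_sub {q : ℝ → ℝ} {q' t : ℝ} (hq : HasDerivAt q q' t) (h : q t ≠ 1) :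
    HasDerivAt (fun s => q s / (1 - q s)) ((1 + q t / (1 - q t)) ^ 2 * q') t := by
  have h1 : 1 - q t ≠ 0 := sub_ne_zero.2 h.symm
  refine (hq.div ((hasDerivAt_const t 1).sub hq) h1).congr_deriv ?_
  simp only [Pi.sub_apply]
  field_simp
  ring

lemma hasDerivAt_mul_mul_one_add_pow_three {A y : ℝ → ℝ} {c t : ℝ}
    (hA : HasDerivAt A (-((1 + y t) ^ 2 * (4 * y t + 1) * c / 3 * A t)) t)
    (hy : HasDerivAt y ((1 + y t) ^ 3 * y t * c / 3) t) :
    HasDerivAt (fun s => A s * y s * (1 + y s) ^ 3) 0 t := by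
  refine ((hA.mul hy).mul ((hy.const_add 1).pow 3)).congr_deriv ?_
  simp only [Pi.mul_apply, Pi.pow_apply]
  ring

theorem stmt_18_general (b a p : ℝ → ℂ) (y : ℝ → ℝ)
    (hda : Differentiable ℝ a) (hdp : Differentiable ℝ p)
    (hpbound : ∀ t : ℝ, ‖p t‖ < 1)
    (hy : ∀ t : ℝ, y t = ‖p t‖ ^ 2 / (1 - ‖p t‖ ^ 2))
    (hpeq : ∀ t : ℝ,
      Complex.I * deriv p t / ((1 + y t : ℝ) : ℂ) ^ 2 =
        (p t / 6) * (2 * (y t : ℂ) * (‖a t‖ : ℂ) ^ 2 +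
          (starRingEnd ℂ) (b t) * a t))
    (haeq : ∀ t : ℝ,
      Complex.I * deriv a t / ((1 + y t : ℝ) : ℂ) ^ 2 =
        (a t / 6) * (5 * (‖b t‖ : ℂ) ^ 2 +
          ((18 * (y t) ^ 2 + 4 * y t : ℝ) : ℂ) * (‖a t‖ : ℂ) ^ 2 +
          ((6 * y t - 1 : ℝ) : ℂ) * (starRingEnd ℂ) (b t) * a t +
          10 * (y t : ℂ) * (starRingEnd ℂ) (a t) * b t)) :
    ∀ t : ℝ, deriv (fun s : ℝ => ‖a s‖ ^ 2 * y s * (1 + y s) ^ 3) t = 0 := by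
  intro t
  set c := (conj (b t) * a t).im
  have hq1 : ‖p t‖ ^ 2 < 1 := pow_lt_one₀ (norm_nonneg _) (hpbound t) two_ne_zero
  have hq1' : 1 - ‖p t‖ ^ 2 ≠ 0 := (sub_pos.2 hq1).ne'
  have hy0 : 0 ≤ y t := hy t ▸ div_nonneg (sq_nonneg _) (sub_nonneg.2 hq1.le)
  have hc : 1 + y t ≠ 0 := by positivity
  have hq : HasDerivAt (‖p ·‖ ^ 2) ((1 + y t) ^ 2 * ‖p t‖ ^ 2 / 3 * c) t := by
    convert hasDerivAt_norm_sq_of_flow (hdp t) hc (hpeq t) using 2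
    simp [c, ← ofReal_pow]
  have hA : HasDerivAt (‖a ·‖ ^ 2) (-((1 + y t) ^ 2 * (4 * y t + 1) * c / 3 * ‖a t‖ ^ 2)) t := by
    convert hasDerivAt_norm_sq_of_flow (hda t) hc (haeq t) using 1
    simp only [c, ← ofReal_pow, mul_im, mul_re, add_im, conj_re, conj_im, ofReal_re, ofReal_im,
      re_ofNat, im_ofNat]
    ring
  have hY : HasDerivAt y ((1 + y t) ^ 3 * y t * c / 3) t := by
    have hqy : ‖p t‖ ^ 2 * (1 + y t) = y t := by
      rw [hy t]; field_simp; ring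
    have hdiv := hq.div_one_sub hq1.ne
    simp only [← hy] at hdiv
    convert hdiv using 1
    linear_combination (-(1 + y t) ^ 3 * c / 3) * hqy
  exact (hasDerivAt_mul_mul_one_add_pow_three hA hY).deriv

theorem stmt_18 (b a p : ℝ → ℂ) (y : ℝ → ℝ)
    (hdb : Differentiable ℝ b) (hda : Differentiable ℝ a) (hdp : Differentiable ℝ p)
    (hpbound : ∀ t : ℝ, ‖p t‖ < 1)
    (hy : ∀ t : ℝ, y t = ‖p t‖ ^ 2 / (1 - ‖p t‖ ^ 2))
    (hpeq : ∀ t : ℝ,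
      Complex.I * deriv p t / ((1 + y t : ℝ) : ℂ) ^ 2 =
        (p t / 6) * (2 * (y t : ℂ) * (‖a t‖ : ℂ) ^ 2 +
          (starRingEnd ℂ) (b t) * a t))
    (haeq : ∀ t : ℝ,
      Complex.I * deriv a t / ((1 + y t : ℝ) : ℂ) ^ 2 =
        (a t / 6) * (5 * (‖b t‖ : ℂ) ^ 2 +
          ((18 * (y t) ^ 2 + 4 * y t : ℝ) : ℂ) * (‖a t‖ : ℂ) ^ 2 +
          ((6 * y t - 1 : ℝ) : ℂ) * (starRingEnd ℂ) (b t) * a t +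
          10 * (y t : ℂ) * (starRingEnd ℂ) (a t) * b t)) :
    ∀ t : ℝ, deriv (fun s : ℝ => ‖a s‖ ^ 2 * y s * (1 + y s) ^ 3) t = 0 :=
  stmt_18_general b a p y hda hdp hpbound hy hpeq haeq
end
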